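/- arXiv:2010.06493 — 13 statements merged into one kernel-verified Lean document; each statement's English description precedes it below -/
import Mathlib

section
/- Let (M,L,∂) be a crossed module, Π a group, and let φ : Π → L and f : Π × Π → M be maps satisfying φ(1) = 1, f(1,y) = f(x,1) = 1 for all x, y ∈ Π, φ(x·y) = ∂(f(x,y))·φ(x)·φ(y), and f(x·y, z)·f(x,y) = f(x, y·z)·^(φ(x))f(y,z) for all x, y, z ∈ Π. Then the set B = M × Π with the operation (a,x)·(b,y) = (a·(^(φ(x))b)·f(x,y)⁻¹, x·y) is a group with identity (1,1); the maps κ : M → B, κ(a) = (a,1), and σ : B → Π, σ(a,x) = x, are group homomorphisms making 1 → M →κ B →σ Π → 1 a short exact sequence; and ϱ : B → L, ϱ(a,x) = ∂(a)·φ(x), is a group homomorphism satisfying ϱ ∘ κ = ∂ and b·κ(m)·b⁻¹ = κ(^(ϱ(b))m) for all b ∈ B, m ∈ M, so that (B, ϱ) is an (M → L)-extension of Π by M. -/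
/-- From a pair `(φ, f)` satisfying the cocycle conditions one constructs an
`(M → L)`-extension of `Q` by `M` on the set `M × Q` (Lemma 7 of the paper). -/
theorem statement1
    {M L Q : Type} [Group M] [Group L] [Group Q]
    (pd : M →* L) (ρ : L →* MulAut M)
    -- crossed module axioms
    (hpeif1 : ∀ (x : L) (m : M), pd (ρ x m) = x * pd m * x⁻¹)
    (hpeif2 : ∀ (n m : M), ρ (pd n) m = n * m * n⁻¹)
    -- the cocycle data
    (φ : Q → L) (f : Q → Q → M)
    (hφ1 : φ 1 = 1)
    (hfnorm : ∀ x y : Q, f 1 y = 1 ∧ f x 1 = 1)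
    (hcc1 : ∀ x y : Q, φ (x * y) = pd (f x y) * φ x * φ y)
    (hcc2 : ∀ x y z : Q, f (x * y) z * f x y = f x (y * z) * ρ (φ x) (f y z))
    -- the operation on B = M × Q
    (op : M × Q → M × Q → M × Q)
    (hop : ∀ (a b : M) (x y : Q),
      op (a, x) (b, y) = (a * ρ (φ x) b * (f x y)⁻¹, x * y)) :
    -- B is a group with identity (1,1):
    (∀ p q r : M × Q, op (op p q) r = op p (op q r)) ∧
    (∀ p : M × Q, op (1, 1) p = p ∧ op p (1, 1) = p) ∧
    (∀ p : M × Q, ∃ q : M × Q, op p q = (1, 1) ∧ op q p = (1, 1)) ∧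
    -- κ : M → B, κ a = (a,1) is an injective homomorphism
    (∀ a b : M, op (a, 1) (b, 1) = ((a * b : M), (1 : Q))) ∧
    (Function.Injective fun a : M => ((a, 1) : M × Q)) ∧
    -- σ : B → Q, σ (a,x) = x is a surjective homomorphism
    (∀ p q : M × Q, (op p q).2 = p.2 * q.2) ∧
    (∀ x : Q, ∃ p : M × Q, p.2 = x) ∧
    -- exactness: ker σ = im κ
    (∀ p : M × Q, p.2 = 1 ↔ ∃ a : M, p = (a, 1)) ∧
    -- ϱ : B → L, ϱ (a,x) = pd a * φ x is a homomorphism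
    (∀ p q : M × Q,
      pd (op p q).1 * φ (op p q).2 = (pd p.1 * φ p.2) * (pd q.1 * φ q.2)) ∧
    -- ϱ ∘ κ = pd
    (∀ a : M, pd ((a, (1 : Q)).1) * φ ((a, (1 : Q)).2) = pd a) ∧
    -- b * κ m * b⁻¹ = κ (^(ϱ b) m): stated using any two-sided inverse of b
    (∀ (p pinv : M × Q) (m : M), op p pinv = (1, 1) → op pinv p = (1, 1) →
      op (op p (m, 1)) pinv = ((ρ (pd p.1 * φ p.2) m : M), (1 : Q))) := by
  have hρ : ∀ (x y : L) (m : M), ρ (x * y) m = ρ x (ρ y m) := by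
    intro x y m; rw [map_mul]; rfl
  have hρ1 : ∀ m : M, ρ (1 : L) m = m := by
    intro m; rw [map_one]; rfl
  -- associativity
  have hassoc : ∀ p q r : M × Q, op (op p q) r = op p (op q r) := by
    rintro ⟨a, x⟩ ⟨b, y⟩ ⟨c, z⟩
    rw [hop, hop, hop, hop]
    refine Prod.ext ?_ (mul_assoc x y z)
    have key1 : ρ (φ (x * y)) c = f x y * ρ (φ x) (ρ (φ y) c) * (f x y)⁻¹ := by
      rw [hcc1, hρ, hρ, hpeif2]
    have key2 : f (x * y) z = f x (y * z) * ρ (φ x) (f y z) * (f x y)⁻¹ :=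
      eq_mul_inv_of_mul_eq (hcc2 x y z)
    simp only [key1, key2, map_mul, map_inv]
    group
  -- identity
  have hid : ∀ p : M × Q, op (1, 1) p = p ∧ op p (1, 1) = p := by
    rintro ⟨a, x⟩
    constructor
    · rw [hop, hφ1, (hfnorm x x).1, hρ1]; simp
    · rw [hop, (hfnorm x x).2]; simp [hρ1]
  -- right inverses
  have hrinv : ∀ p : M × Q, ∃ q : M × Q, op p q = (1, 1) := by
    rintro ⟨a, x⟩
    refine ⟨((ρ (φ x)).symm (a⁻¹ * f x x⁻¹), x⁻¹), ?_⟩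
    rw [hop, MulEquiv.apply_symm_apply]
    simp [mul_assoc]
  -- two-sided inverses
  have hinv : ∀ p : M × Q, ∃ q : M × Q, op p q = (1, 1) ∧ op q p = (1, 1) := by
    intro p
    obtain ⟨q, hq⟩ := hrinv p
    obtain ⟨r, hr⟩ := hrinv q
    refine ⟨q, hq, ?_⟩
    calc op q p = op (op q p) (1, 1) := ((hid _).2).symm
      _ = op (op q p) (op q r) := by rw [hr]
      _ = op q (op p (op q r)) := hassoc _ _ _
      _ = op q (op (op p q) r) := by rw [hassoc]
      _ = op q r := by rw [hq, (hid r).1]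
      _ = (1, 1) := hr
  refine ⟨hassoc, hid, hinv, ?_, ?_, ?_, ?_, ?_, ?_, ?_, ?_⟩
  · intro a b
    rw [hop, hφ1, (hfnorm 1 1).2, hρ1]; simp
  · intro a b h
    simpa using congrArg Prod.fst h
  · rintro ⟨a, x⟩ ⟨b, y⟩; rw [hop]
  · intro x; exact ⟨(1, x), rfl⟩
  · rintro ⟨a, x⟩
    constructor
    · rintro rfl; exact ⟨a, rfl⟩
    · rintro ⟨b, hb⟩; exact (congrArg Prod.snd hb)
  · rintro ⟨a, x⟩ ⟨b, y⟩
    rw [hop]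
    simp only [hcc1, map_mul, map_inv, hpeif1]
    group
  · intro a; rw [hφ1]; simp
  · rintro ⟨a, x⟩ ⟨b, y⟩ m h1 h2
    rw [hop] at h1
    have hx : x * y = 1 := congrArg Prod.snd h1
    have ha : ρ (φ x) b * (f x y)⁻¹ = a⁻¹ := by
      have h' : a * (ρ (φ x) b * (f x y)⁻¹) = 1 := by
        have := congrArg Prod.fst h1
        simpa [mul_assoc] using this
      exact eq_inv_of_mul_eq_one_right h'
    have hin : op (a, x) (m, 1) = (a * ρ (φ x) m, x) := by
      rw [hop, (hfnorm x x).2]; simp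
    rw [hin, hop, hx]
    have hr2 : ρ (pd a * φ x) m = a * ρ (φ x) m * a⁻¹ := by
      rw [hρ, hpeif2]
    rw [hr2, ← ha]
    refine Prod.ext ?_ rfl
    simp only
    group
end

section
/- Let (M,L,∂) be a crossed module, Π a group, and let (B, ϱ) and (B', ϱ') be two (M → L)-extensions of Π by M, with set-theoretic sections u : Π → B of σ and u' : Π → B' of σ' satisfying u(1) = 1, u'(1) = 1, and associated pairs (f, φ) and (f', φ'). Then the two extensions are weakly congruent if and only if there exist a map t : Π → M and an element τ ∈ L such that for all x, y ∈ Π: f'(x,y) = t(x·y)⁻¹·(^τ f(x,y))·t(x)·^(φ'(x))t(y) and φ(x) = τ⁻¹·∂(t(x))·φ'(x)·τ. -/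
/-!
Every element of an extension is uniquely `κ m * u x`, so a section `w` of `σ'` with factor set
`ρ τ ∘ f` and with `ϱ' ∘ w = τ φ τ⁻¹` yields a weak congruence `κ m * u x ↦ κ' (ρ τ m) * w x`;
conversely a weak congruence `α` yields such a section `α ∘ u`. Every section of `σ'` has the form
`w x = κ' (t x) * u' x`, with factor set `t (x y) * f' x y * (ρ (φ' x) (t y))⁻¹ * (t x)⁻¹` and
`ϱ' (w x) = ∂ (t x) * φ' x`; so the two conditions on `w` are exactly the stated relations.
-/

open Function

section Extension

variable {M B Q : Type*} [Group M] [Group B] [Group Q] {κ : M →* B} {σ : B →* Q}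

theorem exists_eq_mul_of_map_eq (hexact : ∀ b, σ b = 1 ↔ b ∈ κ.range) {b c : B}
    (h : σ b = σ c) : ∃ m, b = κ m * c := by
  obtain ⟨m, hm⟩ := (hexact (b * c⁻¹)).1 (by rw [map_mul, map_inv, h, mul_inv_cancel])
  exact ⟨m, by rw [hm, inv_mul_cancel_right]⟩

theorem bijective_mul_section (hκ : Injective κ) (hexact : ∀ b, σ b = 1 ↔ b ∈ κ.range)
    {u : Q → B} (hu : ∀ x, σ (u x) = x) : Bijective fun p : M × Q => κ p.1 * u p.2 := by
  refine ⟨fun ⟨m, x⟩ ⟨n, y⟩ h => ?_, fun b => ?_⟩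
  · have hσκ : ∀ m, σ (κ m) = 1 := fun m => (hexact _).2 ⟨m, rfl⟩
    obtain rfl : x = y := by simpa [hσκ, hu] using congrArg σ h
    rw [hκ (mul_right_cancel h : κ m = κ n)]
  · obtain ⟨m, hm⟩ := exists_eq_mul_of_map_eq hexact (hu (σ b)).symm
    exact ⟨(m, σ b), hm.symm⟩

theorem eq_of_eq_on_kernel_of_eq_on_section {X : Type*} [Group X]
    (hexact : ∀ b, σ b = 1 ↔ b ∈ κ.range) {u : Q → B} (hu : ∀ x, σ (u x) = x)
    {g₁ g₂ : B →* X} (hκ : ∀ m, g₁ (κ m) = g₂ (κ m)) (hu' : ∀ x, g₁ (u x) = g₂ (u x)) (b : B) :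
    g₁ b = g₂ b := by
  obtain ⟨m, hm⟩ := exists_eq_mul_of_map_eq hexact (hu (σ b)).symm
  rw [hm, map_mul, map_mul, hκ, hu']

theorem mul_section_mul_mul_section {u : Q → B} {a : Q → M → M} {f : Q → Q → M}
    (hconj : ∀ x n, u x * κ n * (u x)⁻¹ = κ (a x n))
    (hf : ∀ x y, κ (f x y) = u (x * y) * (u y)⁻¹ * (u x)⁻¹) (m n : M) (x y : Q) :
    κ m * u x * (κ n * u y) = κ (m * a x n * (f x y)⁻¹) * u (x * y) := by
  rw [map_mul, map_mul, map_inv, ← hconj, hf]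
  group

theorem factor_eq_iff_of_eq_kernel_mul {L : Type*} [Group L] {ρ : L →* MulAut M} {ϱ : B →* L}
    (hκ : Injective κ) (hconj : ∀ b m, b * κ m * b⁻¹ = κ (ρ (ϱ b) m)) {u : Q → B}
    {f : Q → Q → M} (hf : ∀ x y, κ (f x y) = u (x * y) * (u y)⁻¹ * (u x)⁻¹) {t : Q → M}
    {w : Q → B} (hw : ∀ x, w x = κ (t x) * u x) (g : M) (x y : Q) :
    f x y = (t (x * y))⁻¹ * g * t x * ρ (ϱ (u x)) (t y) ↔
      κ g = w (x * y) * (w y)⁻¹ * (w x)⁻¹ := by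
  have hw_factor : w (x * y) * (w y)⁻¹ * (w x)⁻¹ =
      κ (t (x * y) * f x y * (ρ (ϱ (u x)) (t y))⁻¹ * (t x)⁻¹) := by
    rw [hw, hw, hw, map_mul, map_mul, map_mul, map_inv, map_inv, hf, ← hconj]
    group
  rw [hw_factor, hκ.eq_iff]
  constructor <;> intro h <;> rw [h] <;> group

theorem exists_mulEquiv_of_section {M' B' : Type*} [Group M'] [Group B'] {κ' : M' →* B'}
    {σ' : B' →* Q} (hκ : Injective κ) (hexact : ∀ b, σ b = 1 ↔ b ∈ κ.range)
    (hκ' : Injective κ') (hexact' : ∀ b, σ' b = 1 ↔ b ∈ κ'.range) (θ : M ≃* M')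
    {u : Q → B} {w : Q → B'} (hu : ∀ x, σ (u x) = x) (hw : ∀ x, σ' (w x) = x)
    {a : Q → M → M} (hu_conj : ∀ x n, u x * κ n * (u x)⁻¹ = κ (a x n))
    (hw_conj : ∀ x n, w x * κ' (θ n) * (w x)⁻¹ = κ' (θ (a x n)))
    {f : Q → Q → M} (hf : ∀ x y, κ (f x y) = u (x * y) * (u y)⁻¹ * (u x)⁻¹)
    (hwf : ∀ x y, κ' (θ (f x y)) = w (x * y) * (w y)⁻¹ * (w x)⁻¹) :
    ∃ α : B ≃* B', (∀ m, α (κ m) = κ' (θ m)) ∧ (∀ x, α (u x) = w x) ∧ ∀ b, σ' (α b) = σ b := by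
  let e := Equiv.ofBijective _ (bijective_mul_section hκ hexact hu)
  let e' := Equiv.ofBijective _ (bijective_mul_section hκ' hexact' hw)
  let F : B ≃ B' := e.symm.trans ((θ.toEquiv.prodCongr (Equiv.refl Q)).trans e')
  have hF : ∀ m x, F (κ m * u x) = κ' (θ m) * w x := fun m x => by
    change F (e (m, x)) = _
    simp [F, e']
  have hF_mul : ∀ b c, F (b * c) = F b * F c := by
    intro b c
    obtain ⟨⟨m, x⟩, rfl⟩ := e.surjective b
    obtain ⟨⟨n, y⟩, rfl⟩ := e.surjective c
    have hw_mul := mul_section_mul_mul_section (κ := κ'.comp θ.toMonoidHom) hw_conj hwf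
      m n x y
    simp only [MonoidHom.comp_apply, MulEquiv.coe_toMonoidHom] at hw_mul
    simp only [Equiv.ofBijective_apply, e]
    rw [mul_section_mul_mul_section hu_conj hf, hF, hF, hF, hw_mul, map_mul, map_mul, map_inv]
  let α : B ≃* B' := MulEquiv.mk F hF_mul
  have hακ : ∀ m, α (κ m) = κ' (θ m) := fun m => by
    have hu_one : κ (f 1 1) = (u 1)⁻¹ := by simpa using hf 1 1
    have hw_one : κ' (θ (f 1 1)) = (w 1)⁻¹ := by simpa using hwf 1 1
    have hκ_eq : κ m = κ (m * f 1 1) * u 1 := by rw [map_mul, hu_one, inv_mul_cancel_right]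
    change F (κ m) = _
    rw [hκ_eq, hF, map_mul, map_mul, hw_one, inv_mul_cancel_right]
  have hαu : ∀ x, α (u x) = w x := fun x => by simpa [α] using hF 1 x
  refine ⟨α, hακ, hαu, eq_of_eq_on_kernel_of_eq_on_section (g₁ := σ'.comp α.toMonoidHom) hexact hu
    (fun m => ?_) (fun x => ?_)⟩
  · simp [hακ, (hexact _).2, (hexact' _).2]
  · simp [hαu, hw, hu]

end Extension

theorem statement3_general
    {M L B B' Q : Type} [Group M] [Group L] [Group B] [Group B'] [Group Q]
    (pd : M →* L) (ρ : L →* MulAut M)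
    -- crossed module axioms
    (hpeif1 : ∀ (x : L) (m : M), pd (ρ x m) = x * pd m * x⁻¹)
    -- first extension
    (κ : M →* B) (σ : B →* Q) (ϱ : B →* L)
    (hκinj : Function.Injective κ)
    (hexact : ∀ b : B, σ b = 1 ↔ b ∈ κ.range)
    (hϱκ : ∀ m : M, ϱ (κ m) = pd m)
    (hconj : ∀ (b : B) (m : M), b * κ m * b⁻¹ = κ (ρ (ϱ b) m))
    -- second extension
    (κ' : M →* B') (σ' : B' →* Q) (ϱ' : B' →* L)
    (hκinj' : Function.Injective κ')
    (hexact' : ∀ b : B', σ' b = 1 ↔ b ∈ κ'.range)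
    (hϱκ' : ∀ m : M, ϱ' (κ' m) = pd m)
    (hconj' : ∀ (b : B') (m : M), b * κ' m * b⁻¹ = κ' (ρ (ϱ' b) m))
    -- sections and associated pairs
    (u : Q → B) (hu : ∀ x : Q, σ (u x) = x)
    (u' : Q → B') (hu' : ∀ x : Q, σ' (u' x) = x)
    (φ : Q → L) (hφ : ∀ x : Q, φ x = ϱ (u x))
    (f : Q → Q → M) (hf : ∀ x y : Q, κ (f x y) = u (x * y) * (u y)⁻¹ * (u x)⁻¹)
    (φ' : Q → L) (hφ' : ∀ x : Q, φ' x = ϱ' (u' x))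
    (f' : Q → Q → M) (hf' : ∀ x y : Q, κ' (f' x y) = u' (x * y) * (u' y)⁻¹ * (u' x)⁻¹) :
    -- weak congruence iff the cocycle relation holds
    (∃ (α : B ≃* B') (τ : L), (∀ m : M, α (κ m) = κ' (ρ τ m)) ∧
      (∀ b : B, σ' (α b) = σ b) ∧ (∀ b : B, τ⁻¹ * ϱ' (α b) * τ = ϱ b)) ↔
    (∃ (t : Q → M) (τ : L), ∀ x y : Q,
      f' x y = (t (x * y))⁻¹ * ρ τ (f x y) * t x * ρ (φ' x) (t y) ∧
      φ x = τ⁻¹ * pd (t x) * φ' x * τ) := by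
  simp only [hφ']
  constructor
  · rintro ⟨α, τ, hακ, hσα, hϱα⟩
    choose t ht using fun x =>
      exists_eq_mul_of_map_eq hexact' (b := α (u x)) (c := u' x) (by rw [hσα, hu, hu'])
    refine ⟨t, τ, fun x y => ⟨?_, ?_⟩⟩
    · rw [factor_eq_iff_of_eq_kernel_mul hκinj' hconj' hf' ht, ← hακ, hf]
      simp only [map_mul, map_inv]
    · rw [hφ, ← hϱα, ht, map_mul, hϱκ']
      group
  · rintro ⟨t, τ, hrel⟩
    set w : Q → B' := fun x => κ' (t x) * u' x with hw
    have hσw : ∀ x, σ' (w x) = x := fun x => by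
      rw [hw, map_mul, (hexact' _).2 ⟨t x, rfl⟩, one_mul, hu']
    have hϱw : ∀ x, ϱ' (w x) = τ * φ x * τ⁻¹ := fun x => by
      rw [hw, map_mul, hϱκ', (hrel x x).2]
      group
    have hw_conj : ∀ x n, w x * κ' (ρ τ n) * (w x)⁻¹ = κ' (ρ τ (ρ (φ x) n)) := fun x n => by
      simp [hconj', hϱw, MulAut.mul_apply]
    have hwf : ∀ x y, κ' (ρ τ (f x y)) = w (x * y) * (w y)⁻¹ * (w x)⁻¹ := fun x y =>
      (factor_eq_iff_of_eq_kernel_mul hκinj' hconj' hf' (fun _ => rfl) _ x y).1 (hrel x y).1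
    obtain ⟨α, hακ, hαu, hσα⟩ := exists_mulEquiv_of_section hκinj hexact hκinj' hexact' (ρ τ) hu
      hσw (fun x n => by rw [hconj, hφ]) hw_conj hf hwf
    refine ⟨α, τ, hακ, hσα, fun b => ?_⟩
    simpa using eq_of_eq_on_kernel_of_eq_on_section
      (g₁ := (MulAut.conj τ⁻¹).toMonoidHom.comp (ϱ'.comp α.toMonoidHom)) hexact hu
      (fun m => by simp [hακ, hϱκ', hϱκ, hpeif1, mul_assoc])
      (fun x => by simp [hαu, hϱw, hφ, mul_assoc]) b

/-- Two `(M → L)`-extensions are weakly congruent iff their associated cocycle pairs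
`(f, φ)` and `(f', φ')` differ by a function `t : Q → M` and an element `τ ∈ L`
as indicated (Proposition 8(2)). -/
theorem statement3
    {M L B B' Q : Type} [Group M] [Group L] [Group B] [Group B'] [Group Q]
    (pd : M →* L) (ρ : L →* MulAut M)
    -- crossed module axioms
    (hpeif1 : ∀ (x : L) (m : M), pd (ρ x m) = x * pd m * x⁻¹)
    (hpeif2 : ∀ (n m : M), ρ (pd n) m = n * m * n⁻¹)
    -- first extension
    (κ : M →* B) (σ : B →* Q) (ϱ : B →* L)
    (hκinj : Function.Injective κ) (hσsurj : Function.Surjective σ)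
    (hexact : ∀ b : B, σ b = 1 ↔ b ∈ κ.range)
    (hϱκ : ∀ m : M, ϱ (κ m) = pd m)
    (hconj : ∀ (b : B) (m : M), b * κ m * b⁻¹ = κ (ρ (ϱ b) m))
    -- second extension
    (κ' : M →* B') (σ' : B' →* Q) (ϱ' : B' →* L)
    (hκinj' : Function.Injective κ') (hσsurj' : Function.Surjective σ')
    (hexact' : ∀ b : B', σ' b = 1 ↔ b ∈ κ'.range)
    (hϱκ' : ∀ m : M, ϱ' (κ' m) = pd m)
    (hconj' : ∀ (b : B') (m : M), b * κ' m * b⁻¹ = κ' (ρ (ϱ' b) m))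
    -- sections and associated pairs
    (u : Q → B) (hu : ∀ x : Q, σ (u x) = x) (hu1 : u 1 = 1)
    (u' : Q → B') (hu' : ∀ x : Q, σ' (u' x) = x) (hu1' : u' 1 = 1)
    (φ : Q → L) (hφ : ∀ x : Q, φ x = ϱ (u x))
    (f : Q → Q → M) (hf : ∀ x y : Q, κ (f x y) = u (x * y) * (u y)⁻¹ * (u x)⁻¹)
    (φ' : Q → L) (hφ' : ∀ x : Q, φ' x = ϱ' (u' x))
    (f' : Q → Q → M) (hf' : ∀ x y : Q, κ' (f' x y) = u' (x * y) * (u' y)⁻¹ * (u' x)⁻¹) :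
    -- weak congruence iff the cocycle relation holds
    (∃ (α : B ≃* B') (τ : L), (∀ m : M, α (κ m) = κ' (ρ τ m)) ∧
      (∀ b : B, σ' (α b) = σ b) ∧ (∀ b : B, τ⁻¹ * ϱ' (α b) * τ = ϱ b)) ↔
    (∃ (t : Q → M) (τ : L), ∀ x y : Q,
      f' x y = (t (x * y))⁻¹ * ρ τ (f x y) * t x * ρ (φ' x) (t y) ∧
      φ x = τ⁻¹ * pd (t x) * φ' x * τ) :=
  statement3_general pd ρ hpeif1 κ σ ϱ hκinj hexact hϱκ hconj κ' σ' ϱ' hκinj' hexact' hϱκ' hconj' u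
    hu u' hu' φ hφ f hf φ' hφ' f' hf'
end

section
/- Let (M,L,∂) be a crossed module in which ∂ is the trivial homomorphism (∂(m) = 1 for all m ∈ M; hence M is abelian and an L-module). Then the set of congruence classes of (M → L)-extensions of a group Π by M is in bijection with the disjoint union, over all group homomorphisms φ : Π → L, of the abelian groups H²(Π, M_φ), where M_φ denotes M with the Π-module structure x·m := ^(φ(x))m, and H²(Π, M_φ) is the group of normalized 2-cocycles f : Π × Π → M_φ (f(1,y) = f(x,1) = 0, f(x·y,z) + f(x,y) = f(x,y·z) + x·f(y,z)) modulo coboundaries (f(x,y) = x·t(y) − t(x·y) + t(x) for some t : Π → M with t(1)=0). -/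
/-- An `(M → L)`-extension of `Q` by `M`, for a crossed module `(M, L, pd)` with
structure morphism `ρ : L →* MulAut M`. -/
structure CMExt (M L Q : Type) [Group M] [Group L] [Group Q]
    (pd : M →* L) (ρ : L →* MulAut M) where
  B : Type
  [grp : Group B]
  κ : M →* B
  σ : B →* Q
  ϱ : B →* L
  κ_inj : Function.Injective κ
  σ_surj : Function.Surjective σ
  exact : ∀ b : B, σ b = 1 ↔ b ∈ κ.range
  comp_eq : ∀ m : M, ϱ (κ m) = pd m
  conj : ∀ (b : B) (m : M), b * κ m * b⁻¹ = κ (ρ (ϱ b) m)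

attribute [instance] CMExt.grp

/-- Congruence of `(M → L)`-extensions. -/
def CMExt.Congruent {M L Q : Type} [Group M] [Group L] [Group Q]
    {pd : M →* L} {ρ : L →* MulAut M} (E E' : CMExt M L Q pd ρ) : Prop :=
  ∃ α : E.B →* E'.B, (∀ m : M, α (E.κ m) = E'.κ m) ∧
    (∀ b : E.B, E'.σ (α b) = E.σ b) ∧ (∀ b : E.B, E'.ϱ (α b) = E.ϱ b)

/-- Normalized 2-cocycles of `Q` with coefficients in `M`, with `Q` acting through
the homomorphism `φ : Q →* L` and the action `ρ` of `L` on `M`. -/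
def Z2phi (M L Q : Type) [Group M] [Group L] [Group Q]
    (ρ : L →* MulAut M) (φ : Q →* L) : Type :=
  {f : Q → Q → M //
    (∀ x y : Q, f 1 y = 1 ∧ f x 1 = 1) ∧
    (∀ x y z : Q, f (x * y) z * f x y = f x (y * z) * ρ (φ x) (f y z))}

/-- Two 2-cocycles are cohomologous if they differ by a coboundary
`(x, y) ↦ ˣt(y) · t(x·y)⁻¹ · t(x)`. -/
def CobRel {M L Q : Type} [Group M] [Group L] [Group Q]
    {ρ : L →* MulAut M} {φ : Q →* L} (f f' : Z2phi M L Q ρ φ) : Prop :=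
  ∃ t : Q → M, t 1 = 1 ∧
    ∀ x y : Q, f.val x y = ρ (φ x) (t y) * (t (x * y))⁻¹ * t x * f'.val x y

namespace Cor10

open scoped Classical

variable {M L Q : Type} [Group M] [Group L] [Group Q]
variable {pd : M →* L} {ρ : L →* MulAut M}

lemma ρ_mul (a b : L) (m : M) : ρ (a * b) m = ρ a (ρ b m) := by rw [map_mul]; rfl

lemma ρ_one (m : M) : ρ (1 : L) m = m := by rw [map_one]; rfl

section withE
variable (E : CMExt M L Q pd ρ)

noncomputable def preim (b : E.B) (h : E.σ b = 1) : M :=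
  ((E.exact b).mp h).choose

lemma κ_preim (b : E.B) (h : E.σ b = 1) : E.κ (preim E b h) = b :=
  ((E.exact b).mp h).choose_spec

lemma σ_κ (m : M) : E.σ (E.κ m) = 1 := (E.exact _).mpr ⟨m, rfl⟩

lemma κ_swap (b : E.B) (m : M) : b * E.κ m = E.κ (ρ (E.ϱ b) m) * b := by
  have h := E.conj b m
  rw [← h]; group

noncomputable def sec : Q → E.B := fun x =>
  if x = 1 then 1 else Function.surjInv E.σ_surj x

lemma σ_sec (x : Q) : E.σ (sec E x) = x := by
  unfold sec; split
  · simp [*]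
  · exact Function.surjInv_eq E.σ_surj x

lemma sec_one : sec E 1 = 1 := by simp [sec]

lemma ϱ_κ (htriv : ∀ m : M, pd m = 1) (m : M) : E.ϱ (E.κ m) = 1 := by
  rw [E.comp_eq, htriv]

lemma ϱ_eq_of_σ_eq (htriv : ∀ m : M, pd m = 1) (b b' : E.B) (h : E.σ b = E.σ b') :
    E.ϱ b = E.ϱ b' := by
  have h1 : E.σ (b * b'⁻¹) = 1 := by rw [map_mul, map_inv, h, mul_inv_cancel]
  obtain ⟨m, hm⟩ := (E.exact _).mp h1
  have hb : b = E.κ m * b' := by rw [hm]; group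
  rw [hb, map_mul, ϱ_κ E htriv, one_mul]

noncomputable def φE (htriv : ∀ m : M, pd m = 1) : Q →* L where
  toFun x := E.ϱ (sec E x)
  map_one' := by show E.ϱ (sec E 1) = 1; rw [sec_one]; simp
  map_mul' x y := by
    have h : E.ϱ (sec E (x * y)) = E.ϱ (sec E x * sec E y) :=
      ϱ_eq_of_σ_eq E htriv _ _ (by rw [map_mul, σ_sec, σ_sec, σ_sec])
    rw [h, map_mul]

lemma φE_apply (htriv : ∀ m : M, pd m = 1) (x : Q) :
    φE E htriv x = E.ϱ (sec E x) := rfl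

lemma ϱ_eq_φE (htriv : ∀ m : M, pd m = 1) (b : E.B) :
    E.ϱ b = φE E htriv (E.σ b) :=
  ϱ_eq_of_σ_eq E htriv _ _ (by rw [σ_sec])

noncomputable def coc (x y : Q) : M :=
  preim E (sec E x * sec E y * (sec E (x * y))⁻¹)
    (by rw [map_mul, map_mul, map_inv, σ_sec, σ_sec, σ_sec, mul_inv_cancel])

lemma κ_coc (x y : Q) : E.κ (coc E x y) = sec E x * sec E y * (sec E (x * y))⁻¹ :=
  κ_preim E _ _

lemma κ_coc' (x y : Q) : E.κ (coc E x y) * sec E (x * y) = sec E x * sec E y := by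
  rw [κ_coc]; group

noncomputable def cocE (htriv : ∀ m : M, pd m = 1) (hcomm : ∀ a b : M, a * b = b * a) :
    Z2phi M L Q ρ (φE E htriv) := by
  refine ⟨coc E, fun x y => ⟨?_, ?_⟩, fun x y z => ?_⟩
  · apply E.κ_inj
    rw [κ_coc, sec_one, one_mul, one_mul, mul_inv_cancel, map_one]
  · apply E.κ_inj
    rw [κ_coc, sec_one, mul_one, mul_one, mul_inv_cancel, map_one]
  · apply E.κ_inj
    simp only [φE_apply]
    rw [hcomm (coc E (x * y) z) (coc E x y), hcomm (coc E x (y * z)) _]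
    rw [map_mul, map_mul]
    calc E.κ (coc E x y) * E.κ (coc E (x * y) z)
        = E.κ (coc E x y) * (sec E (x * y) * sec E z * (sec E (x * y * z))⁻¹) := by
          rw [κ_coc E (x * y) z]
      _ = (E.κ (coc E x y) * sec E (x * y)) * sec E z * (sec E (x * y * z))⁻¹ := by
          group
      _ = sec E x * sec E y * sec E z * (sec E (x * y * z))⁻¹ := by rw [κ_coc']
      _ = sec E x * (sec E y * sec E z) * (sec E (x * (y * z)))⁻¹ := by
          rw [mul_assoc x y z]; group
      _ = sec E x * (E.κ (coc E y z) * sec E (y * z)) * (sec E (x * (y * z)))⁻¹ := by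
          rw [κ_coc']
      _ = (sec E x * E.κ (coc E y z)) * sec E (y * z) * (sec E (x * (y * z)))⁻¹ := by
          group
      _ = (E.κ (ρ (E.ϱ (sec E x)) (coc E y z)) * sec E x) * sec E (y * z) *
            (sec E (x * (y * z)))⁻¹ := by rw [κ_swap]
      _ = E.κ (ρ (E.ϱ (sec E x)) (coc E y z)) *
            (sec E x * sec E (y * z) * (sec E (x * (y * z)))⁻¹) := by group
      _ = E.κ (ρ (E.ϱ (sec E x)) (coc E y z)) * E.κ (coc E x (y * z)) := by
          rw [κ_coc E x (y * z)]

end withE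

end Cor10

namespace Cor10

variable {M L Q : Type} [Group M] [Group L] [Group Q]
variable {pd : M →* L} {ρ : L →* MulAut M}

/-- Key comparison lemma: two sections of congruent extensions yield cohomologous
cocycles. -/
lemma key (hcomm : ∀ a b : M, a * b = b * a)
    (E E' : CMExt M L Q pd ρ) (α : E.B →* E'.B)
    (hκ : ∀ m, α (E.κ m) = E'.κ m) (hσ : ∀ b, E'.σ (α b) = E.σ b)
    (u : Q → E.B) (u' : Q → E'.B) (hu : ∀ x, E.σ (u x) = x) (hu' : ∀ x, E'.σ (u' x) = x)
    (hu1 : u 1 = 1) (hu1' : u' 1 = 1)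
    (g g' : Q → Q → M)
    (hg : ∀ x y, E.κ (g x y) = u x * u y * (u (x * y))⁻¹)
    (hg' : ∀ x y, E'.κ (g' x y) = u' x * u' y * (u' (x * y))⁻¹)
    (φ : Q →* L) (hφ' : ∀ x, E'.ϱ (u' x) = φ x) :
    ∃ t : Q → M, t 1 = 1 ∧
      ∀ x y, g x y = ρ (φ x) (t y) * (t (x * y))⁻¹ * t x * g' x y := by
  letI : CommGroup M := @CommGroup.mk M ‹_› hcomm
  have hσt : ∀ x, E'.σ (α (u x) * (u' x)⁻¹) = 1 := fun x => by
    rw [map_mul, map_inv, hσ, hu, hu', mul_inv_cancel]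
  set t : Q → M := fun x => preim E' (α (u x) * (u' x)⁻¹) (hσt x) with ht
  have hκt : ∀ x, E'.κ (t x) = α (u x) * (u' x)⁻¹ := fun x => κ_preim E' _ _
  have hαu : ∀ x, α (u x) = E'.κ (t x) * u' x := fun x => by rw [hκt]; group
  refine ⟨t, ?_, fun x y => ?_⟩
  · apply E'.κ_inj
    rw [hκt, hu1, hu1', map_one, map_one, one_mul, inv_one]
  · apply E'.κ_inj
    have lhs : E'.κ (g x y) =
        E'.κ (t x) * (E'.κ (ρ (φ x) (t y)) * (E'.κ (g' x y) * (E'.κ (t (x * y)))⁻¹)) := by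
      calc E'.κ (g x y) = α (E.κ (g x y)) := (hκ _).symm
        _ = α (u x) * α (u y) * (α (u (x * y)))⁻¹ := by
            rw [hg, map_mul, map_mul, map_inv]
        _ = (E'.κ (t x) * u' x) * (E'.κ (t y) * u' y) *
              (E'.κ (t (x * y)) * u' (x * y))⁻¹ := by rw [hαu, hαu, hαu]
        _ = E'.κ (t x) * (u' x * E'.κ (t y)) * u' y *
              ((u' (x * y))⁻¹ * (E'.κ (t (x * y)))⁻¹) := by group
        _ = E'.κ (t x) * (E'.κ (ρ (E'.ϱ (u' x)) (t y)) * u' x) * u' y *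
              ((u' (x * y))⁻¹ * (E'.κ (t (x * y)))⁻¹) := by rw [κ_swap]
        _ = E'.κ (t x) * E'.κ (ρ (φ x) (t y)) *
              (u' x * u' y * (u' (x * y))⁻¹) * (E'.κ (t (x * y)))⁻¹ := by
            rw [hφ']; group
        _ = E'.κ (t x) * E'.κ (ρ (φ x) (t y)) * E'.κ (g' x y) *
              (E'.κ (t (x * y)))⁻¹ := by rw [hg']
        _ = E'.κ (t x) * (E'.κ (ρ (φ x) (t y)) * (E'.κ (g' x y) *
              (E'.κ (t (x * y)))⁻¹)) := by group
    rw [lhs, ← map_inv, ← map_mul, ← map_mul, ← map_mul]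
    congr 1
    ac_rfl

end Cor10

namespace Cor10

@[ext] structure Wr (M Q : Type) where
  m : M
  q : Q

variable {M L Q : Type} [Group M] [Group L] [Group Q]
variable {pd : M →* L} {ρ : L →* MulAut M}

def wmul (φ : Q →* L) (f : Z2phi M L Q ρ φ) (p r : Wr M Q) : Wr M Q :=
  ⟨p.m * ρ (φ p.q) r.m * f.val p.q r.q, p.q * r.q⟩

lemma assoc_aux (hcomm : ∀ a b : M, a * b = b * a) (a b d : M) {c e g h : M}
    (hc : e * c = h * g) : a * b * c * d * e = a * (b * d * g) * h := by
  letI : CommGroup M := @CommGroup.mk M ‹_› hcomm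
  calc a * b * c * d * e = a * b * d * (e * c) := by ac_rfl
    _ = a * b * d * (h * g) := by rw [hc]
    _ = a * (b * d * g) * h := by ac_rfl

lemma cancel_aux (hcomm : ∀ a b : M, a * b = b * a) (a b x y w f' : M) :
    a * b * (y * w⁻¹ * x * f') * w = a * x * (b * y) * f' := by
  letI : CommGroup M := @CommGroup.mk M ‹_› hcomm
  calc a * b * (y * w⁻¹ * x * f') * w = a * x * (b * y) * f' * (w⁻¹ * w) := by ac_rfl
    _ = a * x * (b * y) * f' := by rw [inv_mul_cancel, mul_one]

def grpW (hcomm : ∀ a b : M, a * b = b * a) (φ : Q →* L) (f : Z2phi M L Q ρ φ) :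
    Group (Wr M Q) where
  mul := wmul φ f
  one := ⟨1, 1⟩
  inv p := ⟨(ρ (φ p.q⁻¹) p.m * f.val p.q⁻¹ p.q)⁻¹, p.q⁻¹⟩
  mul_assoc p r s := by
    refine Wr.ext ?_ (mul_assoc _ _ _)
    show p.m * ρ (φ p.q) r.m * f.val p.q r.q * ρ (φ (p.q * r.q)) s.m *
        f.val (p.q * r.q) s.q =
      p.m * ρ (φ p.q) (r.m * ρ (φ r.q) s.m * f.val r.q s.q) * f.val p.q (r.q * s.q)
    rw [map_mul (ρ (φ p.q)), map_mul (ρ (φ p.q)), ← ρ_mul, ← map_mul φ]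
    exact assoc_aux hcomm _ _ _ (f.prop.2 p.q r.q s.q)
  one_mul p := by
    refine Wr.ext ?_ (one_mul _)
    show 1 * ρ (φ 1) p.m * f.val 1 p.q = p.m
    rw [map_one φ, ρ_one, one_mul, (f.prop.1 p.q p.q).1, mul_one]
  mul_one p := by
    refine Wr.ext ?_ (mul_one _)
    show p.m * ρ (φ p.q) 1 * f.val p.q 1 = p.m
    rw [map_one (ρ (φ p.q)), mul_one, (f.prop.1 p.q p.q).2, mul_one]
  inv_mul_cancel p := by
    refine Wr.ext ?_ (inv_mul_cancel _)
    show (ρ (φ p.q⁻¹) p.m * f.val p.q⁻¹ p.q)⁻¹ * ρ (φ p.q⁻¹) p.m * f.val p.q⁻¹ p.q = 1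
    rw [mul_assoc, inv_mul_cancel]

def EE (htriv : ∀ m : M, pd m = 1) (hcomm : ∀ a b : M, a * b = b * a)
    (φ : Q →* L) (f : Z2phi M L Q ρ φ) : CMExt M L Q pd ρ := by
  letI : Group (Wr M Q) := grpW hcomm φ f
  refine
    { B := Wr M Q
      κ := { toFun := fun m => ⟨m, 1⟩, map_one' := rfl, map_mul' := fun a b => ?_ }
      σ := { toFun := fun p => p.q, map_one' := rfl, map_mul' := fun p r => rfl }
      ϱ := { toFun := fun p => φ p.q, map_one' := map_one φ, map_mul' := fun p r => map_mul φ _ _ }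
      κ_inj := fun a b h => congrArg Wr.m h
      σ_surj := fun x => ⟨⟨1, x⟩, rfl⟩
      exact := fun b => ⟨fun h => ⟨b.m, by refine Wr.ext rfl ?_; exact h.symm⟩, ?_⟩
      comp_eq := fun m => ?_
      conj := fun b m => ?_ }
  · show (⟨a * b, 1⟩ : Wr M Q) = wmul φ f ⟨a, 1⟩ ⟨b, 1⟩
    refine Wr.ext ?_ (one_mul 1).symm
    show a * b = a * ρ (φ 1) b * f.val 1 1
    rw [map_one φ, ρ_one, (f.prop.1 1 1).1, mul_one]
  · rintro ⟨m, rfl⟩; rfl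
  · show φ 1 = pd m
    rw [map_one φ, htriv]
  · have hbm : b * (⟨m, 1⟩ : Wr M Q) = wmul φ f ⟨ρ (φ b.q) m, 1⟩ b := by
      show wmul φ f b ⟨m, 1⟩ = wmul φ f ⟨ρ (φ b.q) m, 1⟩ b
      refine Wr.ext ?_ ?_
      · show b.m * ρ (φ b.q) m * f.val b.q 1 = ρ (φ b.q) m * ρ (φ 1) b.m * f.val 1 b.q
        rw [(f.prop.1 b.q b.q).2, (f.prop.1 b.q b.q).1, map_one φ, ρ_one, mul_one,
          mul_one, hcomm]
      · show b.q * 1 = 1 * b.q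
        rw [mul_one, one_mul]
    show b * (⟨m, 1⟩ : Wr M Q) * b⁻¹ = ⟨ρ (φ b.q) m, 1⟩
    rw [hbm]
    show (⟨ρ (φ b.q) m, 1⟩ : Wr M Q) * b * b⁻¹ = ⟨ρ (φ b.q) m, 1⟩
    group

end Cor10


namespace Cor10

variable {M L Q : Type} [Group M] [Group L] [Group Q]
variable {pd : M →* L} {ρ : L →* MulAut M}

lemma EE_congr (htriv : ∀ m : M, pd m = 1) (hcomm : ∀ a b : M, a * b = b * a)
    (φ : Q →* L) (f f' : Z2phi M L Q ρ φ) (h : CobRel f f') :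
    CMExt.Congruent (EE htriv hcomm φ f) (EE htriv hcomm φ f') := by
  obtain ⟨t, ht1, htf⟩ := h
  refine ⟨{ toFun := fun p => (⟨Wr.m p * t (Wr.q p), Wr.q p⟩ : Wr M Q),
            map_one' := ?_, map_mul' := fun p r => ?_ }, fun m => ?_, fun b => rfl, fun b => rfl⟩
  · show (⟨(1 : M) * t 1, (1 : Q)⟩ : Wr M Q) = ⟨1, 1⟩
    rw [ht1, mul_one]
  · show (⟨Wr.m (wmul φ f p r) * t (Wr.q (wmul φ f p r)), Wr.q (wmul φ f p r)⟩ : Wr M Q)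
      = wmul φ f' ⟨Wr.m p * t (Wr.q p), Wr.q p⟩ ⟨Wr.m r * t (Wr.q r), Wr.q r⟩
    refine Wr.ext ?_ rfl
    show Wr.m p * ρ (φ (Wr.q p)) (Wr.m r) * f.val (Wr.q p) (Wr.q r) * t (Wr.q p * Wr.q r)
      = Wr.m p * t (Wr.q p) * ρ (φ (Wr.q p)) (Wr.m r * t (Wr.q r)) * f'.val (Wr.q p) (Wr.q r)
    rw [htf (Wr.q p) (Wr.q r), map_mul (ρ (φ (Wr.q p)))]
    exact cancel_aux hcomm _ _ _ _ _ _
  · show (⟨m * t 1, (1 : Q)⟩ : Wr M Q) = ⟨m, 1⟩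
    rw [ht1, mul_one]

noncomputable def FE (htriv : ∀ m : M, pd m = 1) (hcomm : ∀ a b : M, a * b = b * a)
    (E : CMExt M L Q pd ρ) :
    Σ ψ : Q →* L, Quot (CobRel (M := M) (L := L) (Q := Q) (ρ := ρ) (φ := ψ)) :=
  ⟨φE E htriv, Quot.mk _ (cocE E htriv hcomm)⟩

lemma sigma_eq {φ φ' : Q →* L} (h : φ = φ') (f : Z2phi M L Q ρ φ) (f' : Z2phi M L Q ρ φ')
    (ht : ∃ t : Q → M, t 1 = 1 ∧
      ∀ x y, f.val x y = ρ (φ x) (t y) * (t (x * y))⁻¹ * t x * f'.val x y) :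
    (⟨φ, Quot.mk _ f⟩ :
        Σ ψ : Q →* L, Quot (CobRel (M := M) (L := L) (Q := Q) (ρ := ρ) (φ := ψ)))
      = ⟨φ', Quot.mk _ f'⟩ := by
  subst h
  exact congrArg (fun q => Sigma.mk φ q) (Quot.sound ht)

lemma FE_congr (htriv : ∀ m : M, pd m = 1) (hcomm : ∀ a b : M, a * b = b * a)
    {E E' : CMExt M L Q pd ρ} (h : E.Congruent E') :
    FE htriv hcomm E = FE htriv hcomm E' := by
  obtain ⟨α, hκ, hσ, hϱ⟩ := h
  have hφ : φE E htriv = φE E' htriv := by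
    ext x
    rw [φE_apply, φE_apply, ← hϱ (sec E x)]
    exact ϱ_eq_of_σ_eq E' htriv _ _ (by rw [hσ, σ_sec, σ_sec])
  refine sigma_eq hφ _ _ ?_
  exact key hcomm E E' α hκ hσ (sec E) (sec E') (σ_sec E) (σ_sec E') (sec_one E) (sec_one E')
    (coc E) (coc E') (κ_coc E) (κ_coc E') (φE E htriv) (fun x => by rw [hφ]; rfl)

lemma GF (htriv : ∀ m : M, pd m = 1) (hcomm : ∀ a b : M, a * b = b * a)
    (E : CMExt M L Q pd ρ) :
    CMExt.Congruent (EE htriv hcomm (φE E htriv) (cocE E htriv hcomm)) E := by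
  refine ⟨{ toFun := fun p => E.κ (Wr.m p) * sec E (Wr.q p),
            map_one' := ?_, map_mul' := fun p r => ?_ }, fun m => ?_, fun b => ?_, fun b => ?_⟩
  · show E.κ 1 * sec E 1 = 1
    rw [map_one, sec_one, mul_one]
  · show E.κ (Wr.m p * ρ (φE E htriv (Wr.q p)) (Wr.m r) * coc E (Wr.q p) (Wr.q r)) *
        sec E (Wr.q p * Wr.q r)
      = E.κ (Wr.m p) * sec E (Wr.q p) * (E.κ (Wr.m r) * sec E (Wr.q r))
    rw [map_mul, map_mul, mul_assoc _ _ (sec E _), κ_coc', φE_apply]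
    calc E.κ (Wr.m p) * E.κ (ρ (E.ϱ (sec E (Wr.q p))) (Wr.m r)) *
          (sec E (Wr.q p) * sec E (Wr.q r))
        = E.κ (Wr.m p) * (E.κ (ρ (E.ϱ (sec E (Wr.q p))) (Wr.m r)) * sec E (Wr.q p) *
            sec E (Wr.q r)) := by group
      _ = E.κ (Wr.m p) * (sec E (Wr.q p) * E.κ (Wr.m r) * sec E (Wr.q r)) := by
          rw [← κ_swap]
      _ = E.κ (Wr.m p) * sec E (Wr.q p) * (E.κ (Wr.m r) * sec E (Wr.q r)) := by group
  · show E.κ m * sec E 1 = E.κ m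
    rw [sec_one, mul_one]
  · show E.σ (E.κ (Wr.m b) * sec E (Wr.q b)) = Wr.q b
    rw [map_mul, σ_κ, one_mul, σ_sec]
  · show E.ϱ (E.κ (Wr.m b) * sec E (Wr.q b)) = φE E htriv (Wr.q b)
    rw [map_mul, ϱ_κ E htriv, one_mul, φE_apply]

def inc (htriv : ∀ m : M, pd m = 1) (hcomm : ∀ a b : M, a * b = b * a)
    (φ : Q →* L) (f : Z2phi M L Q ρ φ) : Q → (EE htriv hcomm φ f).B := fun z => ⟨1, z⟩

lemma FG (htriv : ∀ m : M, pd m = 1) (hcomm : ∀ a b : M, a * b = b * a)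
    (φ : Q →* L) (f : Z2phi M L Q ρ φ) :
    FE htriv hcomm (EE htriv hcomm φ f) = ⟨φ, Quot.mk _ f⟩ := by
  have hq : ∀ x, Wr.q (sec (EE htriv hcomm φ f) x) = x := fun x => σ_sec (EE htriv hcomm φ f) x
  have hφ : φE (EE htriv hcomm φ f) htriv = φ := by
    ext x
    rw [φE_apply]
    show φ (Wr.q (sec (EE htriv hcomm φ f) x)) = φ x
    rw [hq]
  refine sigma_eq hφ _ _ ?_
  have h1 : ∀ x y : Q, inc htriv hcomm φ f x * inc htriv hcomm φ f y
      = (EE htriv hcomm φ f).κ (f.val x y) * inc htriv hcomm φ f (x * y) := by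
    intro x y
    show wmul φ f ⟨1, x⟩ ⟨1, y⟩ = wmul φ f ⟨f.val x y, 1⟩ ⟨1, x * y⟩
    refine Wr.ext ?_ ?_
    · show 1 * ρ (φ x) 1 * f.val x y = f.val x y * ρ (φ 1) 1 * f.val 1 (x * y)
      rw [map_one (ρ (φ x)), map_one (ρ (φ 1)), (f.prop.1 1 (x * y)).1, one_mul, one_mul,
        mul_one, mul_one]
    · show x * y = 1 * (x * y)
      rw [one_mul]
  have hg' : ∀ x y : Q, (EE htriv hcomm φ f).κ (f.val x y)
      = inc htriv hcomm φ f x * inc htriv hcomm φ f y * (inc htriv hcomm φ f (x * y))⁻¹ := by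
    intro x y
    rw [h1]
    group
  exact key hcomm (EE htriv hcomm φ f) (EE htriv hcomm φ f)
    (MonoidHom.id (EE htriv hcomm φ f).B) (fun m => rfl) (fun b => rfl)
    (sec (EE htriv hcomm φ f)) (inc htriv hcomm φ f)
    (σ_sec (EE htriv hcomm φ f)) (fun x => rfl) (sec_one (EE htriv hcomm φ f)) rfl
    (coc (EE htriv hcomm φ f)) (fun x y => f.val x y) (κ_coc (EE htriv hcomm φ f)) hg'
    (φE (EE htriv hcomm φ f) htriv) (fun x => by rw [hφ]; rfl)

end Cor10


/-- Corollary 10: if `pd : M → L` is the trivial homomorphism (so that `M` is an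
`L`-module), then congruence classes of `(M → L)`-extensions of `Q` by `M` are in
bijection with the disjoint union over all homomorphisms `φ : Q →* L` of the
second cohomology `H²(Q, M_φ)`, i.e. normalized 2-cocycles modulo coboundaries. -/
theorem statement5
    {M L Q : Type} [Group M] [Group L] [Group Q]
    (pd : M →* L) (ρ : L →* MulAut M)
    (hpeif1 : ∀ (x : L) (m : M), pd (ρ x m) = x * pd m * x⁻¹)
    (hpeif2 : ∀ (n m : M), ρ (pd n) m = n * m * n⁻¹)
    (htriv : ∀ m : M, pd m = 1) :
    Nonempty (Quot (CMExt.Congruent (M := M) (L := L) (Q := Q) (pd := pd) (ρ := ρ)) ≃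
      ((φ : Q →* L) × Quot (CobRel (M := M) (L := L) (Q := Q) (ρ := ρ) (φ := φ)))) := by

  have hcomm : ∀ a b : M, a * b = b * a := by
    intro a b
    have h := hpeif2 b a
    rw [htriv b, Cor10.ρ_one] at h
    have h2 : b * a * b⁻¹ * b = b * a := by group
    rw [← h2, ← h]
  refine ⟨⟨Quot.lift (Cor10.FE htriv hcomm) (fun E E' h => Cor10.FE_congr htriv hcomm h),
    fun p => Quot.lift (fun f => Quot.mk _ (Cor10.EE htriv hcomm p.1 f))
      (fun f f' h => Quot.sound (Cor10.EE_congr htriv hcomm p.1 f f' h)) p.2,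
    fun q => ?_, fun p => ?_⟩⟩
  · induction q using Quot.ind with
    | _ E => exact Quot.sound (Cor10.GF htriv hcomm E)
  · obtain ⟨φ, qf⟩ := p
    induction qf using Quot.ind with
    | _ f => exact Cor10.FG htriv hcomm φ f
end

section
/- Let G be a group, Γ a G-bouquet, x an object of Γ, and M = Aut_Γ(x). Let G_Γ be the set of all pairs (λ, g) with g ∈ G and λ : ᵍx → x a morphism in Γ. Then the operation (λ, g) • (μ, h) = (λ ∘ (ᵍμ), g·h) makes G_Γ a group; the map κ : M → G_Γ, κ(m) = (m, 1), is an injective group homomorphism; the map p : G_Γ → G, p(λ, g) = g, is a surjective group homomorphism; and the kernel of p equals the image of κ. Thus 1 → M →κ G_Γ →p G → 1 is a short exact sequence of groups. -/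
open CategoryTheory

/-- Lemma 14: for a `G`-bouquet `Γ` with chosen object `x`, the set `G_Γ` of pairs
`(λ, g)` with `λ : ᵍx ⟶ x`, equipped with `(λ, g) • (μ, h) = (λ ∘ ᵍμ, g·h)`, is a
group fitting into a short exact sequence `1 → M → G_Γ → G → 1`, where
`M = Aut_Γ(x)`. -/
theorem statement9
    {G : Type} [Group G] {Γ : Type} [Groupoid Γ]
    (Φ : G → Γ ⥤ Γ) (hone : Φ 1 = 𝟭 Γ)
    (hmul : ∀ g h : G, Φ (g * h) = Φ h ⋙ Φ g)
    (hconn : ∀ a b : Γ, Nonempty (a ⟶ b))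
    (x : Γ)
    (op : ((g : G) × ((Φ g).obj x ⟶ x)) → ((g : G) × ((Φ g).obj x ⟶ x)) →
      ((g : G) × ((Φ g).obj x ⟶ x)))
    (hop : ∀ (g h : G) (lam : (Φ g).obj x ⟶ x) (mu : (Φ h).obj x ⟶ x),
      op ⟨g, lam⟩ ⟨h, mu⟩ =
        ⟨g * h, eqToHom (show (Φ (g * h)).obj x = (Φ g).obj ((Φ h).obj x) by
          rw [hmul g h]; rfl) ≫ (Φ g).map mu ≫ lam⟩)
    (κ : (x ⟶ x) → (g : G) × ((Φ g).obj x ⟶ x))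
    (hκ : ∀ m : x ⟶ x,
      κ m = ⟨1, eqToHom (show (Φ (1 : G)).obj x = x by rw [hone]; rfl) ≫ m⟩) :
    -- • is associative
    (∀ p q r, op (op p q) r = op p (op q r)) ∧
    -- κ (𝟙 x) is a two-sided identity
    (∀ p, op (κ (𝟙 x)) p = p ∧ op p (κ (𝟙 x)) = p) ∧
    -- inverses exist
    (∀ p, ∃ q, op p q = κ (𝟙 x) ∧ op q p = κ (𝟙 x)) ∧
    -- κ is an injective homomorphism from (Aut_Γ(x), ∘)
    (∀ m n : x ⟶ x, op (κ m) (κ n) = κ (n ≫ m)) ∧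
    Function.Injective κ ∧
    -- p : (λ, g) ↦ g is a surjective homomorphism
    (∀ p q, (op p q).1 = p.1 * q.1) ∧
    (∀ g : G, ∃ p : (g' : G) × ((Φ g').obj x ⟶ x), p.1 = g) ∧
    -- the kernel of p is the image of κ
    (∀ p : (g' : G) × ((Φ g').obj x ⟶ x), p.1 = 1 ↔ ∃ m : x ⟶ x, p = κ m) := by
  have key : ∀ {a b : G} (h : a = b) (f : (Φ a).obj x ⟶ x) (g' : (Φ b).obj x ⟶ x),
      (eqToHom (by rw [h]) ≫ g' = f) →
      (⟨a, f⟩ : (g : G) × ((Φ g).obj x ⟶ x)) = ⟨b, g'⟩ := by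
    rintro a b rfl f g' h
    simp only [eqToHom_refl, Category.id_comp] at h
    subst h; rfl
  refine ⟨?_, ?_, ?_, ?_, ?_, ?_, ?_, ?_⟩
  · rintro ⟨g, lam⟩ ⟨h, mu⟩ ⟨k, nu⟩
    rw [hop, hop, hop, hop]
    refine key (mul_assoc g h k) _ _ ?_
    have h1 := Functor.congr_hom (hmul g h) nu
    simp only [Functor.comp_map] at h1
    rw [h1]
    simp [eqToHom_map]
  · rintro ⟨g, lam⟩
    constructor
    · rw [hκ, hop]
      refine key (one_mul g) _ _ ?_
      have h1 := Functor.congr_hom hone lam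
      simp only [Functor.id_map] at h1
      rw [h1]
      simp
    · rw [hκ, hop]
      refine key (mul_one g) _ _ ?_
      simp [eqToHom_map]
  · rintro ⟨g, lam⟩
    refine ⟨⟨g⁻¹, (Φ g⁻¹).map (Groupoid.inv lam) ≫
      eqToHom (show (Φ g⁻¹).obj ((Φ g).obj x) = x by
        rw [← Functor.comp_obj, ← hmul, inv_mul_cancel, hone]; rfl)⟩, ?_, ?_⟩
    · rw [hop, hκ]
      refine key (mul_inv_cancel g) _ _ ?_
      have e : Φ g⁻¹ ⋙ Φ g = 𝟭 Γ := by rw [← hmul, mul_inv_cancel, hone]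
      have h1 := Functor.congr_hom e (Groupoid.inv lam)
      simp only [Functor.comp_map, Functor.id_map] at h1
      rw [Functor.map_comp, h1]
      simp [eqToHom_map]
    · rw [hop, hκ]
      refine key (inv_mul_cancel g) _ _ ?_
      simp [← Functor.map_comp_assoc]
  · intro m n
    rw [hκ, hκ, hop, hκ]
    refine key (one_mul (1 : G)) _ _ ?_
    have h1 := Functor.congr_hom hone n
    simp only [Functor.id_map] at h1
    rw [Functor.map_comp, h1]
    simp [eqToHom_map]
  · intro m n h
    rw [hκ, hκ] at h
    injection h with h1 h2
    exact (cancel_epi (eqToHom _)).mp h2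
  · rintro ⟨g, lam⟩ ⟨h, mu⟩
    rw [hop]
  · intro g
    obtain ⟨lam⟩ := hconn ((Φ g).obj x) x
    exact ⟨⟨g, lam⟩, rfl⟩
  · rintro ⟨g, lam⟩
    constructor
    · rintro rfl
      refine ⟨eqToHom (show x = (Φ (1 : G)).obj x by rw [hone]; rfl) ≫ lam, ?_⟩
      rw [hκ]
      simp
    · rintro ⟨m, hm⟩
      rw [hκ] at hm
      exact congrArg (fun p => p.1) hm
end

section
/- Let G be a group acting on a crossed module (M,L,∂), and let (Γ, a, η, θ) be a G-bouquet defined over (M,L,∂). Choose for each g ∈ G a morphism λ_g : ᵍa → a with λ_1 = id_a, and set φ(g) := θ_{g,λ_g} ∈ L and f(g,h) := η⁻¹(λ_{g·h} ∘ (ᵍλ_h)⁻¹ ∘ λ_g⁻¹) ∈ M. Then for all g, h, t ∈ G: (i) φ(g·h) = ∂(f(g,h))·φ(g)·φ(h) in L; (ii) f(g·h, t)·f(g,h) = f(g, h·t)·^(φ(g))f(h,t) in M; (iii) f(1,g) = 1 = f(g,1). -/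
open CategoryTheory

/-- Lemma 18(i)-(iii): for a `G`-equivariant bouquet `(Γ, a, η, θ)` defined over a
crossed module `(M, L, pd)` and a chosen family of morphisms `λ_g : ᵍa ⟶ a` with
`λ_1 = id`, the associated pair `(φ, f)` satisfies the nonabelian 2-cocycle
identities and the normalization conditions. -/
theorem statement10
    {G M L : Type} [Group G] [Group M] [Group L]
    (pd : M →* L) (ρ : L →* MulAut M)
    -- crossed module axioms
    (hpeif1 : ∀ (x : L) (m : M), pd (ρ x m) = x * pd m * x⁻¹)
    (hpeif2 : ∀ (n m : M), ρ (pd n) m = n * m * n⁻¹)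
    -- G-action on the crossed module
    (φM : G →* MulAut M) (φL : G →* MulAut L)
    (hact1 : ∀ (g : G) (m : M), pd (φM g m) = φL g (pd m))
    (hact2 : ∀ (g : G) (x : L) (m : M), φM g (ρ x m) = ρ (φL g x) (φM g m))
    -- the G-bouquet Γ
    {Γ : Type} [Groupoid Γ]
    (Φ : G → Γ ⥤ Γ) (hone : Φ 1 = 𝟭 Γ)
    (hmul : ∀ g h : G, Φ (g * h) = Φ h ⋙ Φ g)
    (hconn : ∀ y z : Γ, Nonempty (y ⟶ z))
    -- Γ defined over the crossed module: object a, isomorphism η, elements θ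
    (a : Γ) (η : M ≃ (a ⟶ a))
    (hη : ∀ m n : M, η (m * n) = η n ≫ η m)
    (θ : (g : G) → ((Φ g).obj a ⟶ a) → L)
    (hθ1 : ∀ m : M,
      θ 1 (eqToHom (show (Φ (1 : G)).obj a = a by rw [hone]; rfl) ≫ η m) = pd m)
    (hθ2 : ∀ (g : G) (lam : (Φ g).obj a ⟶ a) (m : M),
      Groupoid.inv lam ≫ (Φ g).map (η m) ≫ lam = η (ρ (θ g lam) m))
    (hθ3 : ∀ (g h : G) (lam : (Φ g).obj a ⟶ a) (mu : (Φ h).obj a ⟶ a),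
      θ g lam * θ h mu =
        θ (g * h) (eqToHom (show (Φ (g * h)).obj a = (Φ g).obj ((Φ h).obj a) by
          rw [hmul g h]; rfl) ≫ (Φ g).map mu ≫ lam))
    -- the chosen family λ_g with λ_1 = id
    (lam : (g : G) → ((Φ g).obj a ⟶ a))
    (hlam1 : lam 1 = eqToHom (show (Φ (1 : G)).obj a = a by rw [hone]; rfl))
    -- the associated pair (φ, f)
    (φ : G → L) (hφ : ∀ g : G, φ g = θ g (lam g))
    (f : G → G → M)
    (hf : ∀ g h : G, η (f g h) =
      Groupoid.inv (lam g) ≫ Groupoid.inv ((Φ g).map (lam h)) ≫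
        eqToHom (show (Φ g).obj ((Φ h).obj a) = (Φ (g * h)).obj a by
          rw [hmul g h]; rfl) ≫ lam (g * h)) :
    (∀ g h : G, φ (g * h) = pd (f g h) * φ g * φ h) ∧
    (∀ g h t : G, f (g * h) t * f g h = f g (h * t) * ρ (φ g) (f h t)) ∧
    (∀ g : G, f 1 g = 1 ∧ f g 1 = 1) := by

  -- basic facts about η
  have ηone : η (1 : M) = 𝟙 a := by
    have h := hη 1 1
    rw [one_mul] at h
    have : η (1:M) ≫ 𝟙 a = η 1 ≫ η 1 := by simpa using h
    exact ((cancel_epi (η (1:M))).mp this).symm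
  have ηinv : ∀ m : M, η m⁻¹ = CategoryTheory.inv (η m) := by
    intro m
    apply IsIso.eq_inv_of_hom_inv_id
    rw [← hη, inv_mul_cancel, ηone]
  -- congruence lemmas
  have θcongr : ∀ {g g' : G} (e : g = g') (l : (Φ g').obj a ⟶ a),
      θ g (eqToHom (by rw [e]) ≫ l) = θ g' l := by
    rintro g g' rfl l; simp
  have lamcongr : ∀ {g g' : G} (e : g = g'),
      lam g = eqToHom (show (Φ g).obj a = (Φ g').obj a by rw [e]) ≫ lam g' := by
    rintro g g' rfl; simp
  -- rearranged defining relation for f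
  have lamrel : ∀ g h : G, lam (g * h) =
      eqToHom (show (Φ (g * h)).obj a = (Φ g).obj ((Φ h).obj a) by rw [hmul g h]; rfl) ≫
        (Φ g).map (lam h) ≫ lam g ≫ η (f g h) := by
    intro g h
    rw [hf]
    simp [Groupoid.inv_eq_inv]
  -- θ of a morphism postcomposed with η m
  have θmul : ∀ (k : G) (μ : (Φ k).obj a ⟶ a) (m : M),
      θ k (μ ≫ η m) = pd m * θ k μ := by
    intro k μ m
    have h3 := hθ3 1 k (eqToHom (show (Φ (1:G)).obj a = a by rw [hone]; rfl) ≫ η m) μ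
    rw [hθ1] at h3
    rw [← θcongr (one_mul k) (μ ≫ η m), h3]
    congr 1
    rw [Functor.congr_hom hone μ]
    simp
  refine ⟨?_, ?_, ?_⟩
  · intro g h
    simp only [hφ]
    rw [mul_assoc, hθ3 g h (lam g) (lam h), ← θmul, lamrel g h]
    simp only [Category.assoc]
  · intro g h t
    apply η.injective
    rw [hη, hη, hφ g, ← hθ2 g (lam g) (f h t)]
    rw [hf g h, hf (g*h) t, hf g (h*t), hf h t]
    rw [lamcongr (mul_assoc g h t), Functor.congr_hom (hmul g h) (lam t)]
    simp [Groupoid.inv_eq_inv, eqToHom_map]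
  · intro g
    constructor
    · apply η.injective
      rw [hf, hlam1, lamcongr (one_mul g), Functor.congr_hom hone (lam g)]
      simp [Groupoid.inv_eq_inv, ηone]
    · apply η.injective
      rw [hf, hlam1, lamcongr (mul_one g)]
      simp [Groupoid.inv_eq_inv, ηone, eqToHom_map]
end

section
/- Let G be a group acting on a crossed module (M,L,∂), and let (Γ, a, η, θ) be a G-bouquet defined over (M,L,∂). Let (λ_g)_{g∈G} and (λ'_g)_{g∈G} be two families of morphisms λ_g, λ'_g : ᵍa → a with λ_1 = λ'_1 = id_a, with associated pairs (φ, f) and (φ', f') (where φ(g) = θ_{g,λ_g}, f(g,h) = η⁻¹(λ_{g·h} ∘ (ᵍλ_h)⁻¹ ∘ λ_g⁻¹), and similarly for the primed family). Define s : G → M by s(g) := η⁻¹(λ'_g ∘ λ_g⁻¹). Then for all g, h ∈ G: φ'(g) = ∂(s(g))·φ(g) and f(g,h) = s(g·h)⁻¹·f'(g,h)·s(g)·^(φ(g))s(h). -/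
open CategoryTheory


lemma theta_congr {G L : Type} {Γ : Type} [CategoryTheory.Groupoid Γ]
    (Φ : G → Γ ⥤ Γ) (a : Γ) (θ : (g : G) → ((Φ g).obj a ⟶ a) → L)
    {g g' : G} (hg : g = g') (l : (Φ g').obj a ⟶ a) :
    θ g' l = θ g (eqToHom (by rw [hg]) ≫ l) := by
  subst hg; simp

/-- Lemma 18(iv): for a `G`-equivariant bouquet `(Γ, a, η, θ)` defined over a
crossed module `(M, L, pd)` and two families of morphisms `λ_g, λ'_g : ᵍa ⟶ a`
with `λ_1 = λ'_1 = id`, the associated pairs `(φ, f)` and `(φ', f')` differ by the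
function `s(g) = η⁻¹(λ'_g ∘ λ_g⁻¹)` as indicated. -/
theorem statement11
    {G M L : Type} [Group G] [Group M] [Group L]
    (pd : M →* L) (ρ : L →* MulAut M)
    -- crossed module axioms
    (hpeif1 : ∀ (x : L) (m : M), pd (ρ x m) = x * pd m * x⁻¹)
    (hpeif2 : ∀ (n m : M), ρ (pd n) m = n * m * n⁻¹)
    -- G-action on the crossed module
    (φM : G →* MulAut M) (φL : G →* MulAut L)
    (hact1 : ∀ (g : G) (m : M), pd (φM g m) = φL g (pd m))
    (hact2 : ∀ (g : G) (x : L) (m : M), φM g (ρ x m) = ρ (φL g x) (φM g m))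
    -- the G-bouquet Γ
    {Γ : Type} [Groupoid Γ]
    (Φ : G → Γ ⥤ Γ) (hone : Φ 1 = 𝟭 Γ)
    (hmul : ∀ g h : G, Φ (g * h) = Φ h ⋙ Φ g)
    (hconn : ∀ y z : Γ, Nonempty (y ⟶ z))
    -- Γ defined over the crossed module: object a, isomorphism η, elements θ
    (a : Γ) (η : M ≃ (a ⟶ a))
    (hη : ∀ m n : M, η (m * n) = η n ≫ η m)
    (θ : (g : G) → ((Φ g).obj a ⟶ a) → L)
    (hθ1 : ∀ m : M,
      θ 1 (eqToHom (show (Φ (1 : G)).obj a = a by rw [hone]; rfl) ≫ η m) = pd m)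
    (hθ2 : ∀ (g : G) (lam : (Φ g).obj a ⟶ a) (m : M),
      Groupoid.inv lam ≫ (Φ g).map (η m) ≫ lam = η (ρ (θ g lam) m))
    (hθ3 : ∀ (g h : G) (lam : (Φ g).obj a ⟶ a) (mu : (Φ h).obj a ⟶ a),
      θ g lam * θ h mu =
        θ (g * h) (eqToHom (show (Φ (g * h)).obj a = (Φ g).obj ((Φ h).obj a) by
          rw [hmul g h]; rfl) ≫ (Φ g).map mu ≫ lam))
    -- the chosen family λ_g with λ_1 = id
    (lam : (g : G) → ((Φ g).obj a ⟶ a))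
    (hlam1 : lam 1 = eqToHom (show (Φ (1 : G)).obj a = a by rw [hone]; rfl))
    -- the associated pair (φ, f)
    (φ : G → L) (hφ : ∀ g : G, φ g = θ g (lam g))
    (f : G → G → M)
    (hf : ∀ g h : G, η (f g h) =
      Groupoid.inv (lam g) ≫ Groupoid.inv ((Φ g).map (lam h)) ≫
        eqToHom (show (Φ g).obj ((Φ h).obj a) = (Φ (g * h)).obj a by
          rw [hmul g h]; rfl) ≫ lam (g * h))
    -- the second family λ'_g with λ'_1 = id and its associated pair (φ', f')
    (lam' : (g : G) → ((Φ g).obj a ⟶ a))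
    (hlam1' : lam' 1 = eqToHom (show (Φ (1 : G)).obj a = a by rw [hone]; rfl))
    (φ' : G → L) (hφ' : ∀ g : G, φ' g = θ g (lam' g))
    (f' : G → G → M)
    (hf' : ∀ g h : G, η (f' g h) =
      Groupoid.inv (lam' g) ≫ Groupoid.inv ((Φ g).map (lam' h)) ≫
        eqToHom (show (Φ g).obj ((Φ h).obj a) = (Φ (g * h)).obj a by
          rw [hmul g h]; rfl) ≫ lam' (g * h))
    -- the comparison function s
    (s : G → M)
    (hs : ∀ g : G, η (s g) = Groupoid.inv (lam g) ≫ lam' g) :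
    (∀ g : G, φ' g = pd (s g) * φ g) ∧
    (∀ g h : G, f g h = (s (g * h))⁻¹ * f' g h * s g * ρ (φ g) (s h)) := by

  have hone' : η 1 = 𝟙 a := by
    have h := hη 1 1
    rw [mul_one] at h
    exact ((cancel_epi (η 1)).mp (by rw [← h]; simp)).symm
  have hinv : ∀ m : M, η m⁻¹ = CategoryTheory.inv (η m) := by
    intro m
    refine (IsIso.inv_eq_of_hom_inv_id ?_).symm
    rw [← hη, inv_mul_cancel, hone']
  constructor
  · intro g
    have key := hθ3 1 g (eqToHom (show (Φ (1 : G)).obj a = a by rw [hone]; rfl)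
      ≫ η (s g)) (lam g)
    rw [hθ1] at key
    rw [hφ', hφ, key, theta_congr Φ a θ (one_mul g).symm]
    congr 1
    have hmap := Functor.congr_hom hone (lam g)
    simp only [hmap, hs, Groupoid.inv_eq_inv, Functor.id_map]
    simp
  · intro g h
    apply η.injective
    rw [hf]
    rw [hη, hη, hη, hφ, ← hθ2, hinv, hs, hf', hs]
    simp only [Groupoid.inv_eq_inv, Functor.map_comp, Functor.map_inv,
      IsIso.inv_comp, Category.assoc, IsIso.hom_inv_id_assoc,
      IsIso.inv_hom_id_assoc, hφ]
    simp [hs]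
end

section
/- Let G be a group acting on a crossed module (M,L,∂), let N = ∂(M) (a normal subgroup of L), Q = L/N the quotient group with quotient map π : L → Q, and let (Γ, a, η, θ) be a G-bouquet defined over (M,L,∂). For a family of morphisms λ_g : ᵍa → a with λ_1 = id_a, set φ(g) := θ_{g,λ_g}. Then the composite ξ := π ∘ φ : G → Q is a group homomorphism, and it is independent of the choice of family (λ_g): if (λ'_g) is another such family with associated φ', then π(φ(g)) = π(φ'(g)) for all g ∈ G. -/
open CategoryTheory

/-- Corollary 19: for a `G`-equivariant bouquet `(Γ, a, η, θ)` defined over a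
crossed module `(M, L, pd)`, with `Q = L/∂(M)` and quotient map `π`, the composite
`ξ = π ∘ φ : G → Q` is a group homomorphism which does not depend on the chosen
family of morphisms `λ_g : ᵍa ⟶ a`. -/
theorem statement12
    {G M L : Type} [Group G] [Group M] [Group L]
    (pd : M →* L) (ρ : L →* MulAut M)
    -- crossed module axioms
    (hpeif1 : ∀ (x : L) (m : M), pd (ρ x m) = x * pd m * x⁻¹)
    (hpeif2 : ∀ (n m : M), ρ (pd n) m = n * m * n⁻¹)
    -- G-action on the crossed module
    (φM : G →* MulAut M) (φL : G →* MulAut L)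
    (hact1 : ∀ (g : G) (m : M), pd (φM g m) = φL g (pd m))
    (hact2 : ∀ (g : G) (x : L) (m : M), φM g (ρ x m) = ρ (φL g x) (φM g m))
    -- the G-bouquet Γ
    {Γ : Type} [Groupoid Γ]
    (Φ : G → Γ ⥤ Γ) (hone : Φ 1 = 𝟭 Γ)
    (hmul : ∀ g h : G, Φ (g * h) = Φ h ⋙ Φ g)
    (hconn : ∀ y z : Γ, Nonempty (y ⟶ z))
    -- Γ defined over the crossed module: object a, isomorphism η, elements θ
    (a : Γ) (η : M ≃ (a ⟶ a))
    (hη : ∀ m n : M, η (m * n) = η n ≫ η m)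
    (θ : (g : G) → ((Φ g).obj a ⟶ a) → L)
    (hθ1 : ∀ m : M,
      θ 1 (eqToHom (show (Φ (1 : G)).obj a = a by rw [hone]; rfl) ≫ η m) = pd m)
    (hθ2 : ∀ (g : G) (lam : (Φ g).obj a ⟶ a) (m : M),
      Groupoid.inv lam ≫ (Φ g).map (η m) ≫ lam = η (ρ (θ g lam) m))
    (hθ3 : ∀ (g h : G) (lam : (Φ g).obj a ⟶ a) (mu : (Φ h).obj a ⟶ a),
      θ g lam * θ h mu =
        θ (g * h) (eqToHom (show (Φ (g * h)).obj a = (Φ g).obj ((Φ h).obj a) by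
          rw [hmul g h]; rfl) ≫ (Φ g).map mu ≫ lam))
    -- the chosen family λ_g with λ_1 = id
    (lam : (g : G) → ((Φ g).obj a ⟶ a))
    (hlam1 : lam 1 = eqToHom (show (Φ (1 : G)).obj a = a by rw [hone]; rfl))
    -- the associated φ
    (φ : G → L) (hφ : ∀ g : G, φ g = θ g (lam g))
    -- the second family λ'_g with λ'_1 = id and its associated φ'
    (lam' : (g : G) → ((Φ g).obj a ⟶ a))
    (hlam1' : lam' 1 = eqToHom (show (Φ (1 : G)).obj a = a by rw [hone]; rfl))
    (φ' : G → L) (hφ' : ∀ g : G, φ' g = θ g (lam' g))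
 :
    haveI hN : (pd.range).Normal :=
      ⟨fun n hn y => by
        obtain ⟨m, hm⟩ := MonoidHom.mem_range.mp hn
        exact MonoidHom.mem_range.mpr ⟨ρ y m, by rw [hpeif1 y m, hm]⟩⟩
    -- ξ = π ∘ φ is a group homomorphism ...
    (∃ ξ : G →* L ⧸ pd.range,
      ∀ g : G, ξ g = QuotientGroup.mk (φ g)) ∧
    -- ... and is independent of the chosen family (λ_g)
    (∀ g : G, (QuotientGroup.mk (φ g) : L ⧸ pd.range) = QuotientGroup.mk (φ' g)) := by
  haveI hN : (pd.range).Normal :=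
    ⟨fun n hn y => by
      obtain ⟨m, hm⟩ := MonoidHom.mem_range.mp hn
      exact MonoidHom.mem_range.mpr ⟨ρ y m, by rw [hpeif1 y m, hm]⟩⟩
  have e1 : (Φ (1 : G)).obj a = a := by rw [hone]; rfl
  -- transporting θ along equalities of group elements
  have θcongr : ∀ {g g' : G} (h : g = g') (x : (Φ g').obj a ⟶ a),
      θ g' x = θ g (eqToHom (by rw [h]) ≫ x) := by
    rintro g g' rfl x; simp
  -- key computation
  have key : ∀ (g : G) (l : (Φ g).obj a ⟶ a) (m : M),
      θ g (l ≫ η (ρ (θ g l) m)) = θ g l * pd m := by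
    intro g l m
    have h3 := hθ3 g 1 l (eqToHom e1 ≫ η m)
    rw [hθ1 m] at h3
    have hmove : (Φ g).map (η m) ≫ l = l ≫ η (ρ (θ g l) m) := by
      have := hθ2 g l m
      calc (Φ g).map (η m) ≫ l
          = l ≫ Groupoid.inv l ≫ (Φ g).map (η m) ≫ l := by
            simp [← Category.assoc]
        _ = l ≫ η (ρ (θ g l) m) := by rw [this]
    rw [h3, θcongr (mul_one g).symm]
    congr 1
    simp [eqToHom_map, hmove]
  have keyQ : ∀ (g : G) (l l' : (Φ g).obj a ⟶ a),
      (QuotientGroup.mk (θ g l) : L ⧸ pd.range) = QuotientGroup.mk (θ g l') := by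
    intro g l l'
    set m' : M := η.symm (Groupoid.inv l ≫ l') with hm'
    have hl' : l' = l ≫ η (ρ (θ g l) ((ρ (θ g l))⁻¹ m')) := by
      have : η (ρ (θ g l) ((ρ (θ g l))⁻¹ m')) = Groupoid.inv l ≫ l' := by
        rw [MulAut.apply_inv_self, hm', Equiv.apply_symm_apply]
      rw [this]; simp [← Category.assoc]
    rw [hl', key]
    have : (QuotientGroup.mk (pd ((ρ (θ g l))⁻¹ m')) : L ⧸ pd.range) = 1 :=
      (QuotientGroup.eq_one_iff _).mpr ⟨_, rfl⟩
    rw [QuotientGroup.mk_mul, this, mul_one]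
  refine ⟨⟨MonoidHom.mk' (fun g => QuotientGroup.mk (φ g)) ?_, fun g => rfl⟩, ?_⟩
  · intro g h
    show (QuotientGroup.mk (φ (g * h)) : L ⧸ pd.range) =
      QuotientGroup.mk (φ g) * QuotientGroup.mk (φ h)
    rw [hφ g, hφ h, hφ (g * h), ← QuotientGroup.mk_mul, hθ3 g h (lam g) (lam h)]
    exact keyQ _ _ _
  · intro g
    rw [hφ g, hφ' g]
    exact keyQ _ _ _
end

section
/- Let G be a group acting on a crossed module (M,L,∂), and let φ : G → L, f : G × G → M be maps satisfying φ(1) = 1, f(1,h) = f(g,1) = 1, φ(g·h) = ∂(f(g,h))·φ(g)·φ(h), and f(g·h,t)·f(g,h) = f(g,h·t)·^(φ(g))f(h,t) for all g, h, t ∈ G. Define a category Γ(φ,f) with set of objects G, with morphisms from g to h the triples (g, α, h) with α ∈ M, composition (h, β, t) ∘ (g, α, h) = (g, β·α, t), and identities (g, 1, g). Then Γ(φ,f) is a groupoid, and the assignments ᵗg := t·g on objects and ᵗ(g, α, h) := (t·g, f(t,h)·(^(φ(t))α)·f(t,g)⁻¹, t·h) on morphisms define, for each t ∈ G, a functor Φ(t)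 : Γ(φ,f) → Γ(φ,f) with Φ(1) = Id and Φ(g·h) = Φ(g) ∘ Φ(h), making Γ(φ,f) a G-bouquet; moreover, with the object 1, the isomorphism η : M → Aut_{Γ(φ,f)}(1), η(α) = (1, α, 1), and θ_{g,(g,λ,1)} := ∂(λ)·φ(g) for each morphism (g, λ, 1) : ᵍ1 = g → 1, the tuple (Γ(φ,f), 1, η, θ) is a G-bouquet defined over (M,L,∂). -/
/-- Proposition 20(i): from a pair `(φ, f)` satisfying the nonabelian 2-cocycle
conditions one obtains the `G`-bouquet `Γ(φ, f)` defined over `(M, L, pd)`: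
its objects are the elements of `G`, the morphisms `g ⟶ h` are the triples
`(g, α, h)` with `α ∈ M`, composition is `(h, β, t) ∘ (g, α, h) = (g, β·α, t)`,
and `t ∈ G` acts by `ᵗg = t·g` on objects and by
`ᵗ(g, α, h) = (t·g, f(t,h)·(^(φ t)α)·f(t,g)⁻¹, t·h)` on morphisms.  Below,
`Fn t g h : M → M` is the action of `t` on the morphisms `g ⟶ h`, and
`θ_{g, (g,λ,1)} = pd λ * φ g` for a morphism `(g, λ, 1) : ᵍ1 = g ⟶ 1`. -/
theorem statement13
    {G M L : Type} [Group G] [Group M] [Group L]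
    (pd : M →* L) (ρ : L →* MulAut M)
    -- crossed module axioms
    (hpeif1 : ∀ (x : L) (m : M), pd (ρ x m) = x * pd m * x⁻¹)
    (hpeif2 : ∀ (n m : M), ρ (pd n) m = n * m * n⁻¹)
    -- G-action on the crossed module
    (φM : G →* MulAut M) (φL : G →* MulAut L)
    (hact1 : ∀ (g : G) (m : M), pd (φM g m) = φL g (pd m))
    (hact2 : ∀ (g : G) (x : L) (m : M), φM g (ρ x m) = ρ (φL g x) (φM g m))
    -- the cocycle data
    (φ : G → L) (f : G → G → M)
    (hφ1 : φ 1 = 1)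
    (hfnorm : ∀ g h : G, f 1 h = 1 ∧ f g 1 = 1)
    (hcc1 : ∀ g h : G, φ (g * h) = pd (f g h) * φ g * φ h)
    (hcc2 : ∀ g h t : G, f (g * h) t * f g h = f g (h * t) * ρ (φ g) (f h t))
    -- the action of t ∈ G on the morphisms (g, α, h) : g ⟶ h of Γ(φ, f)
    (Fn : G → G → G → M → M)
    (hFn : ∀ (t g h : G) (α : M), Fn t g h α = f t h * ρ (φ t) α * (f t g)⁻¹) :
    -- Γ(φ, f) is a groupoid: composition (via multiplication in M) is associative,
    -- (g, 1, g) are identities, and every morphism is invertible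
    (∀ α β γ : M, γ * β * α = γ * (β * α)) ∧
    (∀ α : M, 1 * α = α ∧ α * 1 = α) ∧
    (∀ α : M, ∃ β : M, β * α = 1 ∧ α * β = 1) ∧
    -- Γ(φ, f) is nonempty and connected (any two objects are joined by a morphism)
    Nonempty G ∧ (∀ g h : G, Nonempty M) ∧
    -- each Φ(t) is a functor: it preserves identities and composition
    (∀ t g : G, Fn t g g 1 = 1) ∧
    (∀ (t g h u : G) (α β : M), Fn t g u (β * α) = Fn t h u β * Fn t g h α) ∧
    -- Φ(1) = Id
    (∀ (g h : G) (α : M), Fn 1 g h α = α) ∧ (∀ g : G, (1 : G) * g = g) ∧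
    -- Φ(s·t) = Φ(s) ∘ Φ(t)
    (∀ (s t g h : G) (α : M), Fn (s * t) g h α = Fn s (t * g) (t * h) (Fn t g h α)) ∧
    (∀ s t g : G, (s * t) * g = s * (t * g)) ∧
    -- η : M → Aut(1), η(α) = (1, α, 1), is a group isomorphism (here the
    -- identity map of M, with composition in Aut(1) given by multiplication)
    (Function.Bijective fun α : M => α) ∧
    -- (Γ(φ, f), 1, η, θ) is defined over (M, L, pd), with θ_{g,(g,λ,1)} = pd λ * φ g:
    -- θ_{1, η(m)} = pd m
    (∀ m : M, pd m * φ 1 = pd m) ∧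
    -- λ ∘ ᵍ(η m) ∘ λ⁻¹ = η (^(θ_{g,λ}) m)
    (∀ (g : G) (lam m : M), lam * Fn g 1 1 m * lam⁻¹ = ρ (pd lam * φ g) m) ∧
    -- θ_{g,λ} · θ_{h,μ} = θ_{g·h, λ ∘ ᵍμ}
    (∀ (g h : G) (lam mu : M),
      (pd lam * φ g) * (pd mu * φ h) = pd (lam * Fn g h 1 mu) * φ (g * h)) := by

  refine ⟨fun α β γ => mul_assoc _ _ _,
    fun α => ⟨one_mul α, mul_one α⟩,
    fun α => ⟨α⁻¹, inv_mul_cancel α, mul_inv_cancel α⟩,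
    ⟨1⟩, fun _ _ => ⟨1⟩, ?_, ?_, ?_, fun g => one_mul g, ?_, fun s t g => mul_assoc s t g,
    Function.bijective_id, ?_, ?_, ?_⟩
  · intro t g; rw [hFn]; simp
  · intro t g h u α β; rw [hFn, hFn, hFn]; simp [map_mul]; group
  · intro g h α; rw [hFn, (hfnorm g h).1, (hfnorm g g).1, hφ1]; simp
  · intro s t g h α
    rw [hFn, hFn, hFn]
    have h1 : f (s * t) h = f s (t * h) * ρ (φ s) (f t h) * (f s t)⁻¹ := by
      rw [← hcc2]; group
    have h2 : f (s * t) g = f s (t * g) * ρ (φ s) (f t g) * (f s t)⁻¹ := by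
      rw [← hcc2]; group
    have h3 : ∀ m : M, ρ (φ (s * t)) m = f s t * ρ (φ s) (ρ (φ t) m) * (f s t)⁻¹ := by
      intro m
      rw [hcc1, map_mul, map_mul]
      simp only [MulAut.mul_apply, hpeif2]
    rw [h1, h2, h3]
    simp only [map_mul, map_inv]
    group
  · intro m; rw [hφ1, mul_one]
  · intro g lam m
    rw [hFn, (hfnorm g 1).2, map_mul, MulAut.mul_apply, hpeif2]
    simp
  · intro g h lam mu
    rw [hFn, (hfnorm g 1).2]
    simp only [map_mul, map_inv, one_mul, hpeif1, hcc1]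
    group
end

section
/- Let G be a group acting on a crossed module (M,L,∂). Then there is a bijection between the set of isomorphism classes of (M → L)-bitorsors and the quotient of Z¹(G, M → L) by the cohomology relation, where Z¹(G, M → L) is the set of pairs (f, τ) with f : G → M and τ ∈ L satisfying f(x·y) = f(x)·(ˣf(y)) and τ = ∂(f(x))·(ˣτ) for all x, y ∈ G, and two pairs (f, τ), (f', τ') are identified iff there exists m ∈ M with τ = ∂(m)·τ' and f(x) = m·f'(x)·(ˣm)⁻¹ for all x ∈ G. -/
/-- An `(M → L)`-bitorsor for a `G`-equivariant crossed module `(M, L, pd)` with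
structure morphism `ρ : L →* MulAut M` and `G`-actions `φM`, `φL`. -/
structure CMBitorsor (G M L : Type) [Group G] [Group M] [Group L]
    (pd : M →* L) (ρ : L →* MulAut M)
    (φM : G →* MulAut M) (φL : G →* MulAut L) where
  P : Type
  nonempty : Nonempty P
  aG : G → P → P
  aM : P → M → P
  α : P → L
  aG_one : ∀ p : P, aG 1 p = p
  aG_mul : ∀ (g h : G) (p : P), aG (g * h) p = aG g (aG h p)
  aM_one : ∀ p : P, aM p 1 = p
  aM_mul : ∀ (p : P) (m n : M), aM p (m * n) = aM (aM p m) n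
  compat : ∀ (g : G) (p : P) (m : M), aG g (aM p m) = aM (aG g p) (φM g m)
  trans : ∀ p q : P, ∃! m : M, q = aM p m
  α_aG : ∀ (g : G) (p : P), α (aG g p) = φL g (α p)
  α_aM : ∀ (p : P) (m : M), α (aM p m) = α p * pd m

/-- Isomorphism of `(M → L)`-bitorsors: a map commuting with both actions and
compatible with the structure maps to `L` (any such morphism is bijective). -/
def CMBitorsor.Iso {G M L : Type} [Group G] [Group M] [Group L]
    {pd : M →* L} {ρ : L →* MulAut M} {φM : G →* MulAut M} {φL : G →* MulAut L}
    (X Y : CMBitorsor G M L pd ρ φM φL) : Prop :=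
  ∃ φ : X.P → Y.P, (∀ (g : G) (p : X.P), φ (X.aG g p) = Y.aG g (φ p)) ∧
    (∀ (p : X.P) (m : M), φ (X.aM p m) = Y.aM (φ p) m) ∧
    (∀ p : X.P, Y.α (φ p) = X.α p)

/-- The set `Z¹(G, M → L)` of 1-cocycles: pairs `(f, τ)` with
`f (x·y) = f x · ˣ(f y)` and `τ = pd (f x) · ˣτ`. -/
def Z1 (G M L : Type) [Group G] [Group M] [Group L]
    (pd : M →* L) (φM : G →* MulAut M) (φL : G →* MulAut L) : Type :=
  {p : (G → M) × L //
    (∀ x y : G, p.1 (x * y) = p.1 x * φM x (p.1 y)) ∧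
    (∀ x : G, p.2 = pd (p.1 x) * φL x p.2)}

/-- The cohomology relation on `Z¹(G, M → L)`. -/
def Z1Rel {G M L : Type} [Group G] [Group M] [Group L]
    {pd : M →* L} {φM : G →* MulAut M} {φL : G →* MulAut L}
    (p q : Z1 G M L pd φM φL) : Prop :=
  ∃ m : M, p.val.2 = pd m * q.val.2 ∧
    ∀ x : G, p.val.1 x = m * q.val.1 x * (φM x m)⁻¹

section Aux

variable {G M L : Type} [Group G] [Group M] [Group L]
  {pd : M →* L} {ρ : L →* MulAut M} {φM : G →* MulAut M} {φL : G →* MulAut L}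

/-- difference: the unique `m` with `q = p · m`. -/
noncomputable def CMBitorsor.sub (X : CMBitorsor G M L pd ρ φM φL) (p q : X.P) : M :=
  (X.trans p q).exists.choose

theorem CMBitorsor.sub_spec (X : CMBitorsor G M L pd ρ φM φL) (p q : X.P) :
    q = X.aM p (X.sub p q) := (X.trans p q).exists.choose_spec

theorem CMBitorsor.sub_eq (X : CMBitorsor G M L pd ρ φM φL) {p q : X.P} {m : M}
    (h : q = X.aM p m) : X.sub p q = m := by
  have hu := X.trans p q
  exact (hu.unique (X.sub_spec p q) h)

/-- cocycle attached to a bitorsor and a basepoint -/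
noncomputable def coc (X : CMBitorsor G M L pd ρ φM φL) (p₀ : X.P) :
    Z1 G M L pd φM φL := by
  refine ⟨⟨fun g => X.sub p₀ (X.aG g p₀), (X.α p₀)⁻¹⟩, ?_, ?_⟩
  · intro x y
    apply X.sub_eq
    rw [X.aM_mul, ← X.sub_spec, ← X.compat, ← X.sub_spec, ← X.aG_mul]
  · intro x
    have h1 : X.α (X.aG x p₀) = φL x (X.α p₀) := X.α_aG x p₀
    rw [X.sub_spec p₀ (X.aG x p₀), X.α_aM] at h1
    simp only [map_inv]
    rw [← h1]
    group

/-- bitorsor attached to a cocycle -/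
@[reducible] def bit (z : Z1 G M L pd φM φL) (ρ : L →* MulAut M)
    (hact1 : ∀ (g : G) (m : M), pd (φM g m) = φL g (pd m)) :
    CMBitorsor G M L pd ρ φM φL where
  P := M
  nonempty := ⟨1⟩
  aG g p := z.val.1 g * φM g p
  aM p m := p * m
  α p := (z.val.2)⁻¹ * pd p
  aG_one p := by
    have h1 : z.val.1 1 = 1 := by
      have := z.2.1 1 1
      simpa using this
    simp [h1]
  aG_mul g h p := by
    rw [z.2.1 g h]
    simp [map_mul, mul_assoc]
  aM_one p := mul_one p
  aM_mul p m n := (mul_assoc p m n).symm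
  compat g p m := by simp [map_mul, mul_assoc]
  trans p q := ⟨p⁻¹ * q, by group, fun m hm => by rw [hm]; group⟩
  α_aG g p := by
    have h := z.2.2 g
    have hk : φL g z.val.2 = (pd (z.val.1 g))⁻¹ * z.val.2 := by
      conv_rhs => rw [h]
      group
    simp only [map_mul, map_inv, hk, hact1]
    group
  α_aM p m := by simp [mul_assoc]

/-- basepoint independence: two cocycles of the same bitorsor are related -/
theorem coc_rel (X : CMBitorsor G M L pd ρ φM φL) (p₀ p₁ : X.P) :
    Z1Rel (coc X p₀) (coc X p₁) := by
  refine ⟨(X.sub p₁ p₀)⁻¹, ?_, ?_⟩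
  · have h : X.α p₀ = X.α p₁ * pd (X.sub p₁ p₀) := by
      rw [X.sub_spec p₁ p₀, X.α_aM] at *
      rw [← X.sub_spec p₁ p₀]
    show (X.α p₀)⁻¹ = pd (X.sub p₁ p₀)⁻¹ * (X.α p₁)⁻¹
    rw [h, map_inv]; group
  · intro x
    set m := X.sub p₁ p₀
    apply X.sub_eq
    show X.aG x p₀ = X.aM p₀ (m⁻¹ * X.sub p₁ (X.aG x p₁) * (φM x m⁻¹)⁻¹)
    have hp0 : p₀ = X.aM p₁ m := X.sub_spec p₁ p₀
    rw [hp0, X.compat, X.sub_spec p₁ (X.aG x p₁), ← X.aM_mul, ← X.aM_mul]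
    congr 1
    rw [X.sub_eq rfl, map_inv, inv_inv]
    group

/-- isomorphic bitorsors give related cocycles -/
theorem coc_iso {X Y : CMBitorsor G M L pd ρ φM φL} (h : X.Iso Y)
    (p₀ : X.P) (q₀ : Y.P) : Z1Rel (coc X p₀) (coc Y q₀) := by
  obtain ⟨φ, hG, hM, hα⟩ := h
  have key : coc X p₀ = coc Y (φ p₀) := by
    apply Subtype.ext
    apply Prod.ext
    · funext g
      show X.sub p₀ (X.aG g p₀) = Y.sub (φ p₀) (Y.aG g (φ p₀))
      symm; apply Y.sub_eq
      rw [← hG, ← hM, ← X.sub_spec]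
    · show (X.α p₀)⁻¹ = (Y.α (φ p₀))⁻¹
      rw [hα]
  rw [key]
  exact coc_rel Y (φ p₀) q₀

/-- related cocycles give isomorphic bitorsors -/
theorem bit_iso {z w : Z1 G M L pd φM φL}
    (hact1 : ∀ (g : G) (m : M), pd (φM g m) = φL g (pd m)) (h : Z1Rel z w) :
    (bit z ρ hact1).Iso (bit w ρ hact1) := by
  obtain ⟨m, hτ, hf⟩ := h
  refine ⟨fun p => m⁻¹ * p, ?_, ?_, ?_⟩
  · intro g p
    show m⁻¹ * (z.val.1 g * φM g p) = w.val.1 g * φM g (m⁻¹ * p)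
    rw [hf g]
    simp [map_mul, map_inv]
    group
  · intro p n
    show m⁻¹ * (p * n) = (m⁻¹ * p) * n
    group
  · intro p
    show (w.val.2)⁻¹ * pd (m⁻¹ * p) = (z.val.2)⁻¹ * pd p
    rw [hτ]
    simp [map_mul, map_inv]
    group

/-- round trip: bit (coc X p₀) is isomorphic to X -/
theorem bit_coc (X : CMBitorsor G M L pd ρ φM φL)
    (hact1 : ∀ (g : G) (m : M), pd (φM g m) = φL g (pd m)) (p₀ : X.P) :
    (bit (coc X p₀) ρ hact1).Iso X := by
  refine ⟨fun m => X.aM p₀ m, ?_, ?_, ?_⟩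
  · intro g m
    show X.aM p₀ (X.sub p₀ (X.aG g p₀) * φM g m) = X.aG g (X.aM p₀ m)
    rw [X.aM_mul, ← X.sub_spec, ← X.compat]
  · intro p m
    show X.aM p₀ (p * m) = X.aM (X.aM p₀ p) m
    exact X.aM_mul p₀ p m
  · intro p
    show X.α (X.aM p₀ p) = ((X.α p₀)⁻¹)⁻¹ * pd p
    rw [X.α_aM, inv_inv]

/-- round trip: coc (bit z) 1 related to z -/
theorem coc_bit (z : Z1 G M L pd φM φL)
    (hact1 : ∀ (g : G) (m : M), pd (φM g m) = φL g (pd m)) :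
    Z1Rel (coc (bit z ρ hact1) 1) z := by
  refine ⟨1, ?_, ?_⟩
  · show ((bit z ρ hact1).α 1)⁻¹ = pd 1 * z.val.2
    show ((z.val.2)⁻¹ * pd (1:M))⁻¹ = pd 1 * z.val.2
    simp
  · intro x
    show (bit z ρ hact1).sub 1 ((bit z ρ hact1).aG x 1) = 1 * z.val.1 x * (φM x 1)⁻¹
    apply (bit z ρ hact1).sub_eq
    show z.val.1 x * φM x 1 = 1 * (1 * z.val.1 x * (φM x 1)⁻¹)
    simp

end Aux

/-- Proposition 23: isomorphism classes of `(M → L)`-bitorsors are in bijection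
with `H¹(G, M → L) = Z¹(G, M → L)/∼`. -/
theorem statement14
    {G M L : Type} [Group G] [Group M] [Group L]
    (pd : M →* L) (ρ : L →* MulAut M)
    (hpeif1 : ∀ (x : L) (m : M), pd (ρ x m) = x * pd m * x⁻¹)
    (hpeif2 : ∀ (n m : M), ρ (pd n) m = n * m * n⁻¹)
    (φM : G →* MulAut M) (φL : G →* MulAut L)
    (hact1 : ∀ (g : G) (m : M), pd (φM g m) = φL g (pd m))
    (hact2 : ∀ (g : G) (x : L) (m : M), φM g (ρ x m) = ρ (φL g x) (φM g m)) :
    Nonempty (Quot (CMBitorsor.Iso (G := G) (M := M) (L := L)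
        (pd := pd) (ρ := ρ) (φM := φM) (φL := φL)) ≃
      Quot (Z1Rel (G := G) (M := M) (L := L)
        (pd := pd) (φM := φM) (φL := φL))) := by
  classical
  refine ⟨{
    toFun := Quot.lift
      (fun X => Quot.mk _ (coc X (Classical.choice X.nonempty)))
      (fun X Y h => Quot.sound (coc_iso h _ _))
    invFun := Quot.lift (fun z => Quot.mk _ (bit z ρ hact1))
      (fun z w h => Quot.sound (bit_iso hact1 h))
    left_inv := ?_
    right_inv := ?_ }⟩
  · intro q
    induction q using Quot.ind with
    | _ X => exact Quot.sound (bit_coc X hact1 (Classical.choice X.nonempty))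
  · intro q
    induction q using Quot.ind with
    | _ z =>
      show Quot.mk _ (coc (bit z ρ hact1) (Classical.choice (bit z ρ hact1).nonempty)) = Quot.mk _ z
      calc Quot.mk _ (coc (bit z ρ hact1) (Classical.choice (bit z ρ hact1).nonempty))
          = Quot.mk _ (coc (bit z ρ hact1) 1) := Quot.sound (coc_rel _ _ _)
        _ = Quot.mk _ z := Quot.sound (coc_bit z hact1)
end

section
/- Let G be a group acting on a crossed module (M,L,∂), let N = ∂(M) (a normal subgroup of L, invariant under the G-action), Q = L/N the quotient group with quotient map π : L → Q and the induced G-action on Q, and let (P, α) be an (M → L)-bitorsor. Then: (a) for all p, q ∈ P one has π(α(p)) = π(α(q)), so the element π_*(P) := π(α(p)⁻¹) ∈ Q is independent of the choice of p ∈ P; (b) π_*(P) is a G-fixed point of Q: ᵍ(π_*(P)) = π_*(P) for all g ∈ G. -/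
theorem MonoidHom.normal_range_of_conj_mem {M L : Type*} [Group M] [Group L] (pd : M →* L)
    (ρ : L → M → M) (hρ : ∀ (x : L) (m : M), pd (ρ x m) = x * pd m * x⁻¹) : pd.range.Normal where
  conj_mem := by
    rintro _ ⟨m, rfl⟩ x
    exact ⟨ρ x m, hρ x m⟩

theorem QuotientGroup.mk_eq_mk_of_transitive {M L P : Type*} [Group M] [Group L] (pd : M →* L)
    (aM : P → M → P) (α : P → L) (hαM : ∀ (p : P) (m : M), α (aM p m) = α p * pd m)
    (htrans : ∀ p q : P, ∃ m : M, q = aM p m) (p q : P) :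
    (QuotientGroup.mk (α p) : L ⧸ pd.range) = QuotientGroup.mk (α q) := by
  obtain ⟨m, rfl⟩ := htrans p q
  exact QuotientGroup.eq.2 ⟨m, by rw [hαM, inv_mul_cancel_left]⟩

theorem statement16_general
    {G M L : Type} [Group G] [Group M] [Group L]
    (pd : M →* L) (ρ : L →* MulAut M)
    -- crossed module axioms
    (hpeif1 : ∀ (x : L) (m : M), pd (ρ x m) = x * pd m * x⁻¹)
    -- G-action on the crossed module
    (φL : G →* MulAut L)
    -- the bitorsor (P, α)
    {P : Type}
    (aG : G → P → P) (aM : P → M → P) (α : P → L)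
    (htrans : ∀ p q : P, ∃! m : M, q = aM p m)
    (hαG : ∀ (g : G) (p : P), α (aG g p) = φL g (α p))
    (hαM : ∀ (p : P) (m : M), α (aM p m) = α p * pd m) :
    -- (a) π(α p) is independent of p, hence so is π_*(P) = π((α p)⁻¹)
    (∀ p q : P, (QuotientGroup.mk (α p) : L ⧸ pd.range) = QuotientGroup.mk (α q)) ∧
    -- (b) π_*(P) is G-fixed: ᵍ(π_*(P)) = π((ᵍ(α p))⁻¹) = π_*(P)
    (∀ (g : G) (p : P),
      (QuotientGroup.mk ((φL g (α p))⁻¹) : L ⧸ pd.range) =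
        QuotientGroup.mk ((α p)⁻¹)) := by
  -- `L ⧸ pd.range` is a coset space; normality makes `mk` commute with inversion.
  have := pd.normal_range_of_conj_mem (fun x => ρ x) hpeif1
  have hconst := QuotientGroup.mk_eq_mk_of_transitive pd aM α hαM fun p q => (htrans p q).exists
  refine ⟨hconst, fun g p => ?_⟩
  rw [QuotientGroup.mk_inv, QuotientGroup.mk_inv, ← hαG, hconst]

/-- Lemmas 25 and 26: for an `(M → L)`-bitorsor `(P, α)`, the class
`π_*(P) = π((α p)⁻¹) ∈ Q = L/∂(M)` does not depend on `p ∈ P`, and it is a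
`G`-fixed point of `Q` (the `G`-action on `Q` being induced by the action on `L`,
i.e. `ᵍ(π y) = π(ᵍy)`). -/
theorem statement16
    {G M L : Type} [Group G] [Group M] [Group L]
    (pd : M →* L) (ρ : L →* MulAut M)
    -- crossed module axioms
    (hpeif1 : ∀ (x : L) (m : M), pd (ρ x m) = x * pd m * x⁻¹)
    (hpeif2 : ∀ (n m : M), ρ (pd n) m = n * m * n⁻¹)
    -- G-action on the crossed module
    (φM : G →* MulAut M) (φL : G →* MulAut L)
    (hact1 : ∀ (g : G) (m : M), pd (φM g m) = φL g (pd m))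
    (hact2 : ∀ (g : G) (x : L) (m : M), φM g (ρ x m) = ρ (φL g x) (φM g m))
    -- the bitorsor (P, α)
    {P : Type} (hP : Nonempty P)
    (aG : G → P → P) (aM : P → M → P) (α : P → L)
    (haG1 : ∀ p : P, aG 1 p = p)
    (haGmul : ∀ (g h : G) (p : P), aG (g * h) p = aG g (aG h p))
    (haM1 : ∀ p : P, aM p 1 = p)
    (haMmul : ∀ (p : P) (m n : M), aM p (m * n) = aM (aM p m) n)
    (hcompat : ∀ (g : G) (p : P) (m : M), aG g (aM p m) = aM (aG g p) (φM g m))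
    (htrans : ∀ p q : P, ∃! m : M, q = aM p m)
    (hαG : ∀ (g : G) (p : P), α (aG g p) = φL g (α p))
    (hαM : ∀ (p : P) (m : M), α (aM p m) = α p * pd m) :
    -- (a) π(α p) is independent of p, hence so is π_*(P) = π((α p)⁻¹)
    (∀ p q : P, (QuotientGroup.mk (α p) : L ⧸ pd.range) = QuotientGroup.mk (α q)) ∧
    -- (b) π_*(P) is G-fixed: ᵍ(π_*(P)) = π((ᵍ(α p))⁻¹) = π_*(P)
    (∀ (g : G) (p : P),
      (QuotientGroup.mk ((φL g (α p))⁻¹) : L ⧸ pd.range) =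
        QuotientGroup.mk ((α p)⁻¹)) :=
  statement16_general pd ρ hpeif1 φL aG aM α htrans hαG hαM
end

section
/- Let G be a group acting on a crossed module (M,L,∂), let A = ker(∂), N = ∂(M), Q = L/N with quotient map π : L → Q school and the induced G-action on Q. Let x ∈ L be an element such that π(x) is G-fixed in Q (ᵍπ(x) = π(x) for all g ∈ G). Then the set B_x := {(m, g) ∈ M × G | ∂(m)·(ᵍx) = x} is a group under the operation (m, g)·(n, h) := (m·(ᵍn), g·h) with identity (1, 1); the map κ : A → B_x, κ(a) = (a, 1), is an injective group homomorphism; the map p : B_x → G, p(m, g) = g, is a surjective group homomorphism; and ker p = κ(A). Thus 1 → A →κ B_x →p G → 1 is a short exact sequence of groups with abelian kernel A. -/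
/-!
The semidirect product `M ⋊ G` acts on `L` by `(m, g) • y = ∂m · ᵍy` (an action because `∂` is
`G`-equivariant), and `B_x` is the stabilizer of `x`, hence a group. Since `π(x)` is `G`-fixed and
`N` is normal, `x · (ᵍx)⁻¹ = ∂m` for some `m`, so `(m, g) ∈ B_x`. An element `(m, 1)` lies in `B_x`
iff `∂m = 1`, and `ker ∂` is central by the second Peiffer identity.
-/

open SemidirectProduct

theorem SemidirectProduct.eq_equivProd_mul {G M : Type*} [Group G] [Group M]
    {φ : G →* MulAut M} {op : M × G → M × G → M × G}
    (hop : ∀ (m n : M) (g h : G), op (m, g) (n, h) = (m * φ g n, g * h)) :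
    op = fun p q ↦ equivProd (equivProd.symm p * equivProd.symm q : M ⋊[φ] G) := by
  ext ⟨m, g⟩ ⟨n, h⟩ <;> simp [hop]

namespace CrossedModule

variable {G M L : Type*} [Group G] [Group M] [Group L]

section BoundaryAction

variable (pd : M →* L) (φM : G →* MulAut M) (φL : G →* MulAut L)
  (hact : ∀ (g : G) (m : M), pd (φM g m) = φL g (pd m))

abbrev boundaryAction : MulAction (M ⋊[φM] G) L where
  smul p y := pd p.left * φL p.right y
  one_smul y := by
    change pd 1 * φL 1 y = y
    simp
  mul_smul p q y := by
    change pd (p.left * φM p.right q.left) * φL (p.right * q.right) y =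
      pd p.left * φL p.right (pd q.left * φL q.right y)
    simp only [map_mul, hact, MulAut.mul_apply, mul_assoc]

/-- The group `B_x` of the paper. -/
def boundaryStabilizer (x : L) : Subgroup (M ⋊[φM] G) :=
  @MulAction.stabilizer _ _ _ (boundaryAction pd φM φL hact) x

variable {pd φM φL hact}

theorem mem_boundaryStabilizer {x : L} {p : M ⋊[φM] G} :
    p ∈ boundaryStabilizer pd φM φL hact x ↔ pd p.left * φL p.right x = x :=
  Iff.rfl

theorem exists_mem_boundaryStabilizer_right_eq [pd.range.Normal] {x : L} {g : G}
    (hx : (QuotientGroup.mk (φL g x) : L ⧸ pd.range) = QuotientGroup.mk x) :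
    ∃ p ∈ boundaryStabilizer pd φM φL hact x, p.right = g := by
  obtain ⟨m, hm⟩ := QuotientGroup.eq_iff_div_mem.mp hx.symm
  exact ⟨⟨m, g⟩, by rw [mem_boundaryStabilizer, hm, div_mul_cancel], rfl⟩

theorem boundaryStabilizer_inf_ker_rightHom (x : L) :
    boundaryStabilizer pd φM φL hact x ⊓ rightHom.ker = pd.ker.map inl := by
  ext p
  simp only [Subgroup.mem_inf, mem_boundaryStabilizer, MonoidHom.mem_ker, rightHom_eq_right,
    Subgroup.mem_map]
  constructor
  · rintro ⟨hp, h⟩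
    rw [h, map_one, MulAut.one_apply, mul_eq_right] at hp
    exact ⟨p.left, hp, by ext <;> simp [h]⟩
  · rintro ⟨a, ha, rfl⟩
    simp [ha]

end BoundaryAction

theorem mul_comm_of_mem_ker {ρ : L →* MulAut M} {pd : M →* L}
    (hpeif : ∀ (n m : M), ρ (pd n) m = n * m * n⁻¹) {a : M} (ha : a ∈ pd.ker) (b : M) :
    a * b = b * a := by
  have h := hpeif a b
  rw [MonoidHom.mem_ker.mp ha, map_one, MulAut.one_apply, eq_mul_inv_iff_mul_eq] at h
  exact h.symm

theorem normal_range {ρ : L →* MulAut M} {pd : M →* L}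
    (hpeif : ∀ (y : L) (m : M), pd (ρ y m) = y * pd m * y⁻¹) : pd.range.Normal where
  conj_mem := by
    rintro _ ⟨m, rfl⟩ y
    exact ⟨ρ y m, hpeif y m⟩

end CrossedModule

open CrossedModule

theorem statement17_general
    {G M L : Type} [Group G] [Group M] [Group L]
    (pd : M →* L) (ρ : L →* MulAut M)
    -- crossed module axioms
    (hpeif1 : ∀ (x : L) (m : M), pd (ρ x m) = x * pd m * x⁻¹)
    (hpeif2 : ∀ (n m : M), ρ (pd n) m = n * m * n⁻¹)
    -- G-action on the crossed module
    (φM : G →* MulAut M) (φL : G →* MulAut L)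
    (hact1 : ∀ (g : G) (m : M), pd (φM g m) = φL g (pd m))
    -- x ∈ L with π(x) a G-fixed point of Q = L/∂(M)
    (x : L)
    (hx : ∀ g : G, (QuotientGroup.mk (φL g x) : L ⧸ pd.range) = QuotientGroup.mk x)
    -- the operation (m, g) · (n, h) = (m · ᵍn, g·h) on M × G
    (op : M × G → M × G → M × G)
    (hop : ∀ (m n : M) (g h : G), op (m, g) (n, h) = (m * φM g n, g * h)) :
    -- B_x is closed under the operation
    (∀ p q : M × G, pd p.1 * φL p.2 x = x → pd q.1 * φL q.2 x = x →
      pd (op p q).1 * φL (op p q).2 x = x) ∧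
    -- the operation is associative with identity (1, 1) ∈ B_x ...
    (∀ p q r : M × G, op (op p q) r = op p (op q r)) ∧
    (pd (1 : M) * φL (1 : G) x = x) ∧
    (∀ p : M × G, op (1, 1) p = p ∧ op p (1, 1) = p) ∧
    -- ... and elements of B_x have inverses in B_x
    (∀ p : M × G, pd p.1 * φL p.2 x = x →
      ∃ q : M × G, pd q.1 * φL q.2 x = x ∧ op p q = (1, 1) ∧ op q p = (1, 1)) ∧
    -- κ : A → B_x, κ a = (a, 1), is an injective homomorphism into B_x
    (∀ a : M, pd a = 1 → pd a * φL (1 : G) x = x) ∧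
    (∀ a b : M, op (a, 1) (b, 1) = ((a * b : M), (1 : G))) ∧
    (Function.Injective fun a : M => ((a, 1) : M × G)) ∧
    -- p : B_x → G, (m, g) ↦ g, is a surjective homomorphism
    (∀ p q : M × G, (op p q).2 = p.2 * q.2) ∧
    (∀ g : G, ∃ p : M × G, pd p.1 * φL p.2 x = x ∧ p.2 = g) ∧
    -- ker p = κ(A)
    (∀ p : M × G, pd p.1 * φL p.2 x = x →
      (p.2 = 1 ↔ ∃ a : M, pd a = 1 ∧ p = (a, 1))) ∧
    -- the kernel A = ker pd is abelian
    (∀ a b : M, pd a = 1 → pd b = 1 → a * b = b * a) := by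
  have : pd.range.Normal := normal_range hpeif1
  obtain rfl := SemidirectProduct.eq_equivProd_mul hop
  let B := boundaryStabilizer pd φM φL hact1 x
  have mem (p : M × G) : pd p.1 * φL p.2 x = x ↔ equivProd.symm p ∈ B := Iff.rfl
  simp only [mem]
  refine ⟨fun p q hp hq ↦ by simpa only [Equiv.symm_apply_apply] using B.mul_mem hp hq,
    fun p q r ↦ by simp [mul_assoc], B.one_mem, fun p ↦ by simp, fun p hp ↦ ?_,
    fun a ha ↦ by simp [ha], fun a b ↦ by simp, Prod.mk_left_injective 1, fun p q ↦ rfl,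
    fun g ↦ ?_, fun p hp ↦ ?_, fun a b ha _ ↦ mul_comm_of_mem_ker hpeif2 ha b⟩
  · refine ⟨equivProd (equivProd.symm p : M ⋊[φM] G)⁻¹,
      by simpa only [Equiv.symm_apply_apply] using B.inv_mem hp, ?_, ?_⟩ <;>
      simp only [Equiv.symm_apply_apply, mul_inv_cancel, inv_mul_cancel] <;> rfl
  · obtain ⟨p, hp, rfl⟩ := exists_mem_boundaryStabilizer_right_eq (hact := hact1) (hx g)
    exact ⟨equivProd p, hp, rfl⟩
  · have h := SetLike.ext_iff.mp (boundaryStabilizer_inf_ker_rightHom (hact := hact1) x)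
      (equivProd.symm p)
    simpa [B, hp, Equiv.eq_symm_apply, eq_comm (a := p)] using h

/-- Proposition 28(iii): for `x ∈ L` whose class in `Q = L/∂(M)` is `G`-fixed, the
set `B_x = {(m, g) ∈ M × G | pd m · ᵍx = x}` is a group under
`(m, g) · (n, h) = (m · ᵍn, g·h)`, giving a short exact sequence
`1 → A → B_x → G → 1` with abelian kernel `A = ker pd`. -/
theorem statement17
    {G M L : Type} [Group G] [Group M] [Group L]
    (pd : M →* L) (ρ : L →* MulAut M)
    -- crossed module axioms
    (hpeif1 : ∀ (x : L) (m : M), pd (ρ x m) = x * pd m * x⁻¹)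
    (hpeif2 : ∀ (n m : M), ρ (pd n) m = n * m * n⁻¹)
    -- G-action on the crossed module
    (φM : G →* MulAut M) (φL : G →* MulAut L)
    (hact1 : ∀ (g : G) (m : M), pd (φM g m) = φL g (pd m))
    (hact2 : ∀ (g : G) (x : L) (m : M), φM g (ρ x m) = ρ (φL g x) (φM g m))
    -- x ∈ L with π(x) a G-fixed point of Q = L/∂(M)
    (x : L)
    (hx : ∀ g : G, (QuotientGroup.mk (φL g x) : L ⧸ pd.range) = QuotientGroup.mk x)
    -- the operation (m, g) · (n, h) = (m · ᵍn, g·h) on M × G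
    (op : M × G → M × G → M × G)
    (hop : ∀ (m n : M) (g h : G), op (m, g) (n, h) = (m * φM g n, g * h)) :
    -- B_x is closed under the operation
    (∀ p q : M × G, pd p.1 * φL p.2 x = x → pd q.1 * φL q.2 x = x →
      pd (op p q).1 * φL (op p q).2 x = x) ∧
    -- the operation is associative with identity (1, 1) ∈ B_x ...
    (∀ p q r : M × G, op (op p q) r = op p (op q r)) ∧
    (pd (1 : M) * φL (1 : G) x = x) ∧
    (∀ p : M × G, op (1, 1) p = p ∧ op p (1, 1) = p) ∧
    -- ... and elements of B_x have inverses in B_x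
    (∀ p : M × G, pd p.1 * φL p.2 x = x →
      ∃ q : M × G, pd q.1 * φL q.2 x = x ∧ op p q = (1, 1) ∧ op q p = (1, 1)) ∧
    -- κ : A → B_x, κ a = (a, 1), is an injective homomorphism into B_x
    (∀ a : M, pd a = 1 → pd a * φL (1 : G) x = x) ∧
    (∀ a b : M, op (a, 1) (b, 1) = ((a * b : M), (1 : G))) ∧
    (Function.Injective fun a : M => ((a, 1) : M × G)) ∧
    -- p : B_x → G, (m, g) ↦ g, is a surjective homomorphism
    (∀ p q : M × G, (op p q).2 = p.2 * q.2) ∧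
    (∀ g : G, ∃ p : M × G, pd p.1 * φL p.2 x = x ∧ p.2 = g) ∧
    -- ker p = κ(A)
    (∀ p : M × G, pd p.1 * φL p.2 x = x →
      (p.2 = 1 ↔ ∃ a : M, pd a = 1 ∧ p = (a, 1))) ∧
    -- the kernel A = ker pd is abelian
    (∀ a b : M, pd a = 1 → pd b = 1 → a * b = b * a) :=
  statement17_general pd ρ hpeif1 hpeif2 φM φL hact1 x hx op hop
end

section
/- Let G be a group acting on a crossed module (M,L,∂), let A = ker(∂), N = ∂(M), Q = L/N with quotient map π : L → Q and induced G-action. Let x ∈ L be such that π(x) is G-fixed in Q, and let 1 → A →κ B_x →p G → 1 be the associated extension, where B_x = {(m, g) ∈ M × G | ∂(m)·(ᵍx) = x} with (m,g)·(n,h) = (m·(ᵍn), g·h), κ(a) = (a,1), p(m,g) = g. Then the following are equivalent: (a) there exists a group homomorphism s : G → B_x with p ∘ s = id_G; (b) there exists an (M → L)-bitorsor (P, α) with π_*(P) = π(x), where π_*(P) := π(α(p₀)⁻¹) for any p₀ ∈ P. -/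
/-- Lemma 30: for `x ∈ L` whose class in `Q = L/∂(M)` is `G`-fixed, the extension
`1 → A → B_x → G → 1` splits (i.e. the obstruction `o(π x)` vanishes) if and only
if there exists an `(M → L)`-bitorsor `(P, α)` with `π_*(P) = π x`. -/
theorem statement18
    {G M L : Type} [Group G] [Group M] [Group L]
    (pd : M →* L) (ρ : L →* MulAut M)
    -- crossed module axioms
    (hpeif1 : ∀ (x : L) (m : M), pd (ρ x m) = x * pd m * x⁻¹)
    (hpeif2 : ∀ (n m : M), ρ (pd n) m = n * m * n⁻¹)
    -- G-action on the crossed module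
    (φM : G →* MulAut M) (φL : G →* MulAut L)
    (hact1 : ∀ (g : G) (m : M), pd (φM g m) = φL g (pd m))
    (hact2 : ∀ (g : G) (x : L) (m : M), φM g (ρ x m) = ρ (φL g x) (φM g m))
    -- x ∈ L with π(x) a G-fixed point of Q = L/∂(M)
    (x : L)
    (hx : ∀ g : G, (QuotientGroup.mk (φL g x) : L ⧸ pd.range) = QuotientGroup.mk x) :
    -- (a) there is a multiplicative section s of p : B_x → G, where
    -- B_x = {(m, g) | pd m · ᵍx = x} with (m, g)·(n, h) = (m · ᵍn, g·h)
    (∃ s : G → {p : M × G // pd p.1 * φL p.2 x = x},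
      (∀ g : G, (s g).val.2 = g) ∧
      (∀ g h : G, (s (g * h)).val =
        ((s g).val.1 * φM ((s g).val.2) ((s h).val.1),
          (s g).val.2 * (s h).val.2)))
    ↔
    -- (b) there is an (M → L)-bitorsor (P, α) with π_*(P) = π x
    (∃ (P : Type) (aG : G → P → P) (aM : P → M → P) (α : P → L),
      Nonempty P ∧
      (∀ p : P, aG 1 p = p) ∧
      (∀ (g h : G) (p : P), aG (g * h) p = aG g (aG h p)) ∧
      (∀ p : P, aM p 1 = p) ∧
      (∀ (p : P) (m n : M), aM p (m * n) = aM (aM p m) n) ∧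
      (∀ (g : G) (p : P) (m : M), aG g (aM p m) = aM (aG g p) (φM g m)) ∧
      (∀ p q : P, ∃! m : M, q = aM p m) ∧
      (∀ (g : G) (p : P), α (aG g p) = φL g (α p)) ∧
      (∀ (p : P) (m : M), α (aM p m) = α p * pd m) ∧
      (∀ p : P, (QuotientGroup.mk ((α p)⁻¹) : L ⧸ pd.range) = QuotientGroup.mk x)) := by
  constructor
  · rintro ⟨s, hs2, hsm⟩
    have hm1 : (s 1).val.1 = 1 := by
      have h := congrArg Prod.fst (hsm 1 1)
      simp only [one_mul, hs2 1, map_one, MulAut.one_apply] at h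
      have h' : (s 1).val.1 * 1 = (s 1).val.1 * (s 1).val.1 := by simpa using h
      exact (mul_left_cancel h').symm
    refine ⟨M, fun g p => (s g).val.1 * φM g p, fun p m => p * m,
      fun p => x⁻¹ * pd p, ⟨1⟩, ?_, ?_, ?_, ?_, ?_, ?_, ?_, ?_, ?_⟩
    · intro p
      show (s 1).val.1 * φM 1 p = p
      simp [hm1]
    · intro g h p
      show (s (g * h)).val.1 * φM (g * h) p
          = (s g).val.1 * φM g ((s h).val.1 * φM h p)
      have h1 := congrArg Prod.fst (hsm g h)
      simp only [hs2 g] at h1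
      simp only [h1, map_mul, MulAut.mul_apply, mul_assoc]
    · intro p; exact mul_one p
    · intro p m n; exact (mul_assoc p m n).symm
    · intro g p m
      show (s g).val.1 * φM g (p * m) = ((s g).val.1 * φM g p) * φM g m
      rw [map_mul, mul_assoc]
    · intro p q
      exact ⟨p⁻¹ * q, by group, fun m hm => by rw [hm]; group⟩
    · intro g p
      show x⁻¹ * pd ((s g).val.1 * φM g p) = φL g (x⁻¹ * pd p)
      have hp := (s g).property
      rw [hs2 g] at hp
      have hpd : pd (s g).val.1 = x * (φL g x)⁻¹ := eq_mul_inv_of_mul_eq hp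
      rw [map_mul, hact1, map_mul, map_inv, hpd]
      group
    · intro p m
      show x⁻¹ * pd (p * m) = (x⁻¹ * pd p) * pd m
      rw [map_mul, mul_assoc]
    · intro p
      show (QuotientGroup.mk (x⁻¹ * pd p)⁻¹ : L ⧸ pd.range) = QuotientGroup.mk x
      rw [QuotientGroup.eq]
      refine ⟨ρ x⁻¹ p, ?_⟩
      rw [hpeif1]; group
  · rintro ⟨P, aG, aM, α, ⟨p₀⟩, h1G, hmulG, h1M, hmulM, hcompat, htor, hαG, hαM, hπ⟩
    have hq : α p₀ * x ∈ pd.range := by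
      have h := hπ p₀
      rw [QuotientGroup.eq] at h
      simpa using h
    obtain ⟨n, hn⟩ := hq
    obtain ⟨q₀, hαq⟩ : ∃ q : P, α q = x⁻¹ := by
      refine ⟨aM p₀ (ρ (α p₀)⁻¹ n⁻¹), ?_⟩
      rw [hαM, hpeif1, map_inv, hn]
      group
    have key : ∀ g : G, ∃! m : M, aG g q₀ = aM q₀ m := fun g => htor q₀ (aG g q₀)
    choose mg hmg hu using key
    have hpd : ∀ g, pd (mg g) * φL g x = x := by
      intro g
      have h := congrArg α (hmg g)
      rw [hαG, hαM, hαq, map_inv] at h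
      have h2 : pd (mg g) = x * (φL g x)⁻¹ := by rw [h]; group
      rw [h2]; group
    refine ⟨fun g => ⟨(mg g, g), hpd g⟩, fun g => rfl, ?_⟩
    intro g h
    have hco : mg (g * h) = mg g * φM g (mg h) := by
      refine (hu (g * h) _ ?_).symm
      rw [hmulG, hmg h, hcompat, hmg g, ← hmulM]
    exact Prod.ext hco rfl
end

section
/- Let G be a group acting on a crossed module (M,L,∂), and assume the crossed module is faithful: if ˣm = ʸm for all m ∈ M then x = y (equivalently, the homomorphism L → Aut(M) given by the action is injective). Let (P, α) be a weak (M → L)-bitorsor, i.e., P is a nonempty set with a left G-action, a right M-action and a left M-action satisfying (m·p)·n = m·(p·n), ᵍ(p·n) = (ᵍp)·(ᵍn), ᵍ(m·p) = (ᵍm)·(ᵍp) for all m, n ∈ M, g ∈ G, p ∈ P; for all p, q ∈ P there is a unique n ∈ M with q = p·n; and α : P → L is a map such that m·p = p·(^(ξ(p))m) for all m ∈ M, p ∈ P, where ξ(p) := α(p)⁻¹. Then α satisfies α(p·n) = α(p)·∂(n) for all p ∈ P, n ∈ M, and α(ᵍp) = ᵍ(α(p)) for all g ∈ G, p ∈ P;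 hence (P, α) is an (M → L)-bitorsor. -/
/-!
The left action is recovered from the right one through `α`: `m·p = p·(^(α p)⁻¹ m)`.
Since the right action is free, computing `m·(p·n)` and `m·(ᵍp)` in two ways determines
the automorphisms `ρ (α (p·n))⁻¹` and `ρ (α (ᵍp))⁻¹` of `M`; by the Peiffer identity and
the compatibility of the `G`-action they agree with `ρ (α p · ∂ n)⁻¹` and `ρ (ᵍ(α p))⁻¹`,
and faithfulness of `ρ` turns these equalities into the identities for `α`.
-/

open Function

lemma injective_of_existsUnique {P M : Type} {aM : P → M → P}
    (htrans : ∀ p q : P, ∃! n : M, q = aM p n) (p : P) : Injective (aM p) :=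
  fun _ b h => (htrans p (aM p b)).unique h.symm rfl

section WeakBitorsor

variable {G M L P : Type} [Group G] [Group M] [Group L]
  {ρ : L →* MulAut M} {aM : P → M → P} {lM : M → P → P} {α : P → L}

lemma weakBitorsor_map_mul_right {pd : M →* L} (hρ : Injective ρ)
    (hpeif2 : ∀ (n m : M), ρ (pd n) m = n * m * n⁻¹)
    (hfree : ∀ p, Injective (aM p))
    (haMmul : ∀ (p : P) (m n : M), aM p (m * n) = aM (aM p m) n)
    (hassoc : ∀ (m n : M) (p : P), aM (lM m p) n = lM m (aM p n))
    (hα : ∀ (m : M) (p : P), lM m p = aM p (ρ (α p)⁻¹ m)) (p : P) (n : M) :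
    α (aM p n) = α p * pd n := by
  have hcomm : ∀ m, n * ρ (α (aM p n))⁻¹ m = ρ (α p)⁻¹ m * n := fun m =>
    hfree p (by rw [haMmul, ← hα, ← hassoc, hα, ← haMmul])
  refine inv_injective (hρ (MulEquiv.ext fun m => ?_))
  rw [mul_inv_rev, map_mul, MulAut.mul_apply, ← map_inv, hpeif2, inv_inv, mul_assoc, ← hcomm]
  group

lemma weakBitorsor_map_smul {φM : G →* MulAut M} {φL : G →* MulAut L} {aG : G → P → P}
    (hρ : Injective ρ)
    (hact2 : ∀ (g : G) (x : L) (m : M), φM g (ρ x m) = ρ (φL g x) (φM g m))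
    (hfree : ∀ p, Injective (aM p))
    (hGr : ∀ (g : G) (p : P) (n : M), aG g (aM p n) = aM (aG g p) (φM g n))
    (hGl : ∀ (g : G) (m : M) (p : P), aG g (lM m p) = lM (φM g m) (aG g p))
    (hα : ∀ (m : M) (p : P), lM m p = aM p (ρ (α p)⁻¹ m)) (g : G) (p : P) :
    α (aG g p) = φL g (α p) := by
  refine inv_injective (hρ (MulEquiv.ext fun m => ?_))
  obtain ⟨m, rfl⟩ := (φM g).surjective m
  refine hfree (aG g p) ?_
  rw [← hα, ← hGl, hα, hGr, hact2, map_inv]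

end WeakBitorsor

theorem statement19_general
    {G M L : Type} [Group G] [Group M] [Group L]
    (pd : M →* L) (ρ : L →* MulAut M)
    -- crossed module axioms
    (hpeif2 : ∀ (n m : M), ρ (pd n) m = n * m * n⁻¹)
    -- faithfulness
    (hfaith : ∀ x y : L, (∀ m : M, ρ x m = ρ y m) → x = y)
    -- G-action on the crossed module
    (φM : G →* MulAut M) (φL : G →* MulAut L)
    (hact2 : ∀ (g : G) (x : L) (m : M), φM g (ρ x m) = ρ (φL g x) (φM g m))
    -- the weak bitorsor (P, α)
    {P : Type}
    (aG : G → P → P) (aM : P → M → P) (lM : M → P → P) (α : P → L)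
    (haMmul : ∀ (p : P) (m n : M), aM p (m * n) = aM (aM p m) n)
    (hassoc : ∀ (m n : M) (p : P), aM (lM m p) n = lM m (aM p n))
    (hGr : ∀ (g : G) (p : P) (n : M), aG g (aM p n) = aM (aG g p) (φM g n))
    (hGl : ∀ (g : G) (m : M) (p : P), aG g (lM m p) = lM (φM g m) (aG g p))
    (htrans : ∀ p q : P, ∃! n : M, q = aM p n)
    -- the map α : P → L with m·p = p·(^(ξ p) m), ξ p = (α p)⁻¹
    (hα : ∀ (m : M) (p : P), lM m p = aM p (ρ (α p)⁻¹ m)) :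
    (∀ (p : P) (n : M), α (aM p n) = α p * pd n) ∧
    (∀ (g : G) (p : P), α (aG g p) = φL g (α p)) := by
  have hρ : Injective ρ := fun x y h => hfaith x y fun m => DFunLike.congr_fun h m
  have hfree := injective_of_existsUnique htrans
  exact ⟨weakBitorsor_map_mul_right hρ hpeif2 hfree haMmul hassoc hα,
    weakBitorsor_map_smul hρ hact2 hfree hGr hGl hα⟩

/-- Proposition 33: if the crossed module `(M, L, pd)` is faithful (the action
homomorphism `L → Aut M` is injective), then every weak `(M → L)`-bitorsor
`(P, α)` is an `(M → L)`-bitorsor: `α` automatically satisfies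
`α (p·n) = α p · pd n` and `α (ᵍp) = ᵍ(α p)`. -/
theorem statement19
    {G M L : Type} [Group G] [Group M] [Group L]
    (pd : M →* L) (ρ : L →* MulAut M)
    -- crossed module axioms
    (hpeif1 : ∀ (x : L) (m : M), pd (ρ x m) = x * pd m * x⁻¹)
    (hpeif2 : ∀ (n m : M), ρ (pd n) m = n * m * n⁻¹)
    -- faithfulness
    (hfaith : ∀ x y : L, (∀ m : M, ρ x m = ρ y m) → x = y)
    -- G-action on the crossed module
    (φM : G →* MulAut M) (φL : G →* MulAut L)
    (hact1 : ∀ (g : G) (m : M), pd (φM g m) = φL g (pd m))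
    (hact2 : ∀ (g : G) (x : L) (m : M), φM g (ρ x m) = ρ (φL g x) (φM g m))
    -- the weak bitorsor (P, α)
    {P : Type} (hP : Nonempty P)
    (aG : G → P → P) (aM : P → M → P) (lM : M → P → P) (α : P → L)
    (haG1 : ∀ p : P, aG 1 p = p)
    (haGmul : ∀ (g h : G) (p : P), aG (g * h) p = aG g (aG h p))
    (haM1 : ∀ p : P, aM p 1 = p)
    (haMmul : ∀ (p : P) (m n : M), aM p (m * n) = aM (aM p m) n)
    (hlM1 : ∀ p : P, lM 1 p = p)
    (hlMmul : ∀ (m n : M) (p : P), lM (m * n) p = lM m (lM n p))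
    (hassoc : ∀ (m n : M) (p : P), aM (lM m p) n = lM m (aM p n))
    (hGr : ∀ (g : G) (p : P) (n : M), aG g (aM p n) = aM (aG g p) (φM g n))
    (hGl : ∀ (g : G) (m : M) (p : P), aG g (lM m p) = lM (φM g m) (aG g p))
    (htrans : ∀ p q : P, ∃! n : M, q = aM p n)
    -- the map α : P → L with m·p = p·(^(ξ p) m), ξ p = (α p)⁻¹
    (hα : ∀ (m : M) (p : P), lM m p = aM p (ρ (α p)⁻¹ m)) :
    (∀ (p : P) (n : M), α (aM p n) = α p * pd n) ∧
    (∀ (g : G) (p : P), α (aG g p) = φL g (α p)) :=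
  statement19_general pd ρ hpeif2 hfaith φM φL hact2 aG aM lM α haMmul hassoc hGr hGl htrans hα
end
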